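/- arXiv:math/9205206 — 5 statements merged into one kernel-verified Lean document; each statement's English description precedes it below -/
import Mathlib

section
/- Suppose 0 < p < q < ∞. If ‖·‖_X is an admissible extended-value quasinorm on the Borel functions of a compact Hausdorff space Ω satisfying a crude upper p-estimate with constant a and a crude lower q-estimate with constant b, then there is an admissible extended-value quasinorm ‖·‖_Y satisfying an upper p-estimate (constant 1) and a lower q-estimate (constant 1) such that ‖f‖_X ≤ ‖f‖_Y ≤ ab ‖f‖_X for all Borel functions f. -/
/-!
Write `‖f‖_M = (inf Σᵢ ‖1_{Aᵢ} f‖_X ^ p) ^ (1/p)`, the infimum over finite Borel partitions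
`(Aᵢ)`. Then `a ‖·‖_M` has an exact upper `p`-estimate and `‖·‖_X ≤ a ‖·‖_M ≤ a ‖·‖_X`, but it
need not be continuous from below. To repair this, let `W` be the greatest fixed point of
`V ↦ min (a ‖·‖_M) V*`, where `V* f` is the infimum of `sup_k V sₖ` over sequences
`0 ≤ sₖ ↑ |f|`; then `W ≤ W*` is continuity from below. Since `‖·‖_X` is continuous from
below, `‖·‖_X ≤ W` by fixed-point induction; the upper estimate, which survives infima of chains
but not of arbitrary families, passes to `W` along the transfinite approximants of the fixed point.
Finally `‖f‖_Y = (sup Σᵢ W(1_{Aᵢ} f) ^ q) ^ (1/q)` has an exact lower `q`-estimate by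
construction, keeps the upper `p`-estimate by Minkowski's inequality in `ℓ^{q/p}`, and
`W ≤ ‖·‖_Y ≤ a b ‖·‖_X` by the crude lower estimate.
-/

open Set Filter Topology MeasureTheory ENNReal

/-- An admissible extended-value quasinorm on the Borel functions of `Ω`. -/
structure AdmissibleQuasinorm (Ω : Type*) [TopologicalSpace Ω] [MeasurableSpace Ω] where
  N : (Ω → ℝ) → ℝ≥0∞
  mono : ∀ f g : Ω → ℝ, Measurable f → Measurable g →
    (∀ x, |f x| ≤ |g x|) → N f ≤ N g
  smul : ∀ (α : ℝ) (f : Ω → ℝ), Measurable f →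
    N (fun x => α * f x) = ENNReal.ofReal |α| * N f
  quasi : ∃ C : ℝ≥0∞, ∀ f g : Ω → ℝ, Measurable f → Measurable g →
    (∀ x, 0 ≤ f x) → (∀ x, 0 ≤ g x) → (∀ x, f x = 0 ∨ g x = 0) →
    N (fun x => f x + g x) ≤ C * (N f + N g)
  exists_pos : ∃ u : Ω → ℝ, Measurable u ∧ (∀ x, 0 < u x) ∧ 0 < N u ∧ N u < ⊤
  (cont : ∀ (f : ℕ → Ω → ℝ) (g : Ω → ℝ), (∀ n, Measurable (f n)) → Measurable g →
    (∀ n x, 0 ≤ f n x) → (∀ n x, f n x ≤ f (n + 1) x) →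
    (∀ x, Tendsto (fun n => f n x) atTop (𝓝 (g x))) →
    Tendsto (fun n => N (f n)) atTop (𝓝 (N g)))

/-- `f₁, …, fₙ` are disjointly supported. -/
def DisjSupp {Ω : Type*} {n : ℕ} (f : Fin n → Ω → ℝ) : Prop :=
  ∀ i j, i ≠ j → ∀ x, f i x = 0 ∨ f j x = 0

/-- A crude upper `p`-estimate with constant `a`. -/
def CrudeUpper {Ω : Type*} [TopologicalSpace Ω] [MeasurableSpace Ω]
    (X : AdmissibleQuasinorm Ω) (p a : ℝ) : Prop :=
  ∀ (n : ℕ) (f : Fin n → Ω → ℝ), (∀ i, Measurable (f i)) → DisjSupp f →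
    X.N (fun x => ∑ i, f i x) ≤ ENNReal.ofReal a * (∑ i, X.N (f i) ^ p) ^ (1 / p)

/-- A crude lower `q`-estimate with constant `b`. -/
def CrudeLower {Ω : Type*} [TopologicalSpace Ω] [MeasurableSpace Ω]
    (X : AdmissibleQuasinorm Ω) (q b : ℝ) : Prop :=
  ∀ (n : ℕ) (f : Fin n → Ω → ℝ), (∀ i, Measurable (f i)) → DisjSupp f →
    (∑ i, X.N (f i) ^ q) ^ (1 / q) ≤ ENNReal.ofReal b * X.N (fun x => ∑ i, f i x)

namespace ENNReal

theorem iInf_rpow {ι : Sort*} (x : ι → ℝ≥0∞) {r : ℝ} (hr : 0 < r) :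
    (⨅ i, x i) ^ r = ⨅ i, x i ^ r :=
  (orderIsoRpow r hr).map_iInf x

theorem iSup_rpow {ι : Sort*} (x : ι → ℝ≥0∞) {r : ℝ} (hr : 0 < r) :
    (⨆ i, x i) ^ r = ⨆ i, x i ^ r :=
  (orderIsoRpow r hr).map_iSup x

theorem ofReal_mul_ofReal_le (a b : ℝ) :
    ENNReal.ofReal a * ENNReal.ofReal b ≤ ENNReal.ofReal (a * b) := by
  rcases le_or_gt 0 a with ha | ha
  · rw [ofReal_mul ha]
  · simp [ofReal_of_nonpos ha.le]

end ENNReal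

namespace OrderHom

open OrdinalApprox Cardinal

variable {α : Type*} [CompleteLattice α] (f : α →o α)

/-- The transfinite approximants `gfpApprox f (f ⊤) o` form a chain and reach `f.gfp`. -/
theorem gfp_induction_of_isChain {p : α → Prop} (htop : p (f ⊤))
    (step : ∀ a, p a → a ≤ f ⊤ → p (f a))
    (hchain : ∀ s : Set α, s.Nonempty → IsChain (· ≤ ·) s → (∀ a ∈ s, p a) → p (sInf s)) :
    p f.gfp := by
  set x := f ⊤
  have happrox : ∀ o, p (gfpApprox f x o) := by
    intro o
    induction o using WellFoundedLT.induction with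
    | _ o ih =>
      have hanti : Antitone fun b : Iio o => f (gfpApprox f x b) :=
        fun b c hbc => f.mono (gfpApprox_anti_right f hbc)
      have heq : gfpApprox f x o =
          sInf (insert x (range fun b : Iio o => f (gfpApprox f x b))) := by
        rw [gfpApprox, sInf_insert, sInf_range, iInf_subtype']
        rfl
      rw [heq]
      refine hchain _ (insert_nonempty _ _) (hanti.isChain_range.insert ?_) ?_
      · rintro _ ⟨b, rfl⟩ _
        exact Or.inr (f.mono le_top)
      · rintro _ (rfl | ⟨b, rfl⟩)
        · exact htop
        · exact step _ (ih b b.2) (gfpApprox_le f)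
  have hfix : gfpApprox f x (ord (Order.succ #α)) = f.gfp :=
    le_antisymm (f.le_gfp (gfpApprox_ord_mem_fixedPoint f (f.mono le_top)).ge)
      (le_gfpApprox_of_mem_fixedPoints f f.isFixedPt_gfp (f.gfp_le_map le_top) _)
  exact hfix ▸ happrox _

end OrderHom

/-! ### Finite Borel partitions -/

/-- A finite Borel partition of `Ω`, encoded by the index of the cell containing each point. -/
structure FinMeasPartition (Ω : Type*) [MeasurableSpace Ω] where
  n : ℕ
  idx : Ω → Fin n
  measurable_idx : Measurable idx

namespace FinMeasPartition

variable {Ω : Type*} [MeasurableSpace Ω] (π : FinMeasPartition Ω)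

def cell (i : Fin π.n) : Set Ω := π.idx ⁻¹' {i}

@[simp]
theorem mem_cell {i : Fin π.n} {x : Ω} : x ∈ π.cell i ↔ π.idx x = i := Iff.rfl

theorem measurableSet_cell (i : Fin π.n) : MeasurableSet (π.cell i) :=
  π.measurable_idx (measurableSet_singleton i)

theorem sum_indicator_cell (f : Ω → ℝ) (x : Ω) : ∑ i, (π.cell i).indicator f x = f x := by
  classical
  simp [Set.indicator_apply]

theorem disjSupp_indicator_cell (f : Ω → ℝ) : DisjSupp fun i => (π.cell i).indicator f := by
  classical
  intro i j hij x
  by_cases hi : π.idx x = i <;> simp [Set.indicator_apply, hi, hij]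

def indiscrete : FinMeasPartition Ω := ⟨1, fun _ => 0, measurable_const⟩

theorem sum_indiscrete {M : Type*} [AddCommMonoid M] (Φ : (Ω → ℝ) → M) (f : Ω → ℝ) :
    ∑ i, Φ (((indiscrete : FinMeasPartition Ω).cell i).indicator f) = Φ f := by
  have hcell (i) : (indiscrete : FinMeasPartition Ω).cell i = univ :=
    eq_univ_of_forall fun _ => Subsingleton.elim (α := Fin 1) _ _
  simp only [hcell, indicator_univ]
  exact Fin.sum_univ_one (M := M) _

open Classical in
noncomputable def piecewise (S : Set Ω) (hS : MeasurableSet S) (π ρ : FinMeasPartition Ω) :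
    FinMeasPartition Ω where
  n := π.n + ρ.n
  idx x := if x ∈ S then Fin.castAdd ρ.n (π.idx x) else Fin.natAdd π.n (ρ.idx x)
  measurable_idx := Measurable.ite hS
    ((measurable_of_finite (Fin.castAdd ρ.n)).comp π.measurable_idx)
    ((measurable_of_finite (Fin.natAdd π.n)).comp ρ.measurable_idx)

theorem sum_piecewise {M : Type*} [AddCommMonoid M] (S : Set Ω) (hS : MeasurableSet S)
    (π ρ : FinMeasPartition Ω) (Φ : Set Ω → M) :
    ∑ i, Φ ((piecewise S hS π ρ).cell i) = ∑ i, Φ (S ∩ π.cell i) + ∑ j, Φ (Sᶜ ∩ ρ.cell j) := by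
  refine (Fin.sum_univ_add fun i => Φ ((piecewise S hS π ρ).cell i)).trans ?_
  congr 1 <;> refine Finset.sum_congr rfl fun i _ => congrArg Φ (Set.ext fun x => ?_)
  all_goals by_cases hx : x ∈ S <;> simp [piecewise, hx, Fin.ext_iff]
  all_goals omega

theorem sum_piecewise_indicator_add {M : Type*} [AddCommMonoid M] {u v : Ω → ℝ} (hv : Measurable v)
    (huv : ∀ x, u x = 0 ∨ v x = 0) (π ρ : FinMeasPartition Ω) (Φ : (Ω → ℝ) → M) :
    ∑ i, Φ (((piecewise _ (hv (measurableSet_singleton 0)) π ρ).cell i).indicator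
      fun x => u x + v x) =
      ∑ i, Φ ((π.cell i).indicator u) + ∑ j, Φ ((ρ.cell j).indicator v) := by
  classical
  rw [sum_piecewise _ _ _ _ fun A => Φ (A.indicator fun x => u x + v x)]
  congr 1 <;> refine Finset.sum_congr rfl fun i _ => congrArg Φ (funext fun x => ?_)
  all_goals
    rcases huv x with hu0 | hv0 <;> by_cases hx : v x = 0 <;> simp [Set.indicator_apply, *]

end FinMeasPartition

theorem abs_indicator_le_abs_indicator {Ω : Type*} {f g : Ω → ℝ} (hfg : ∀ x, |f x| ≤ |g x|)
    (A : Set Ω) (x : Ω) : |A.indicator f x| ≤ |A.indicator g x| := by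
  by_cases hx : x ∈ A <;> simp [hx, hfg x]

theorem DisjSupp.tail {Ω : Type*} {n : ℕ} {fs : Fin (n + 1) → Ω → ℝ} (h : DisjSupp fs) :
    DisjSupp fun i => fs i.succ :=
  fun i j hij => h i.succ j.succ (Fin.succ_injective n |>.ne hij)

theorem DisjSupp.head_or_sum_tail {Ω : Type*} {n : ℕ} {fs : Fin (n + 1) → Ω → ℝ}
    (h : DisjSupp fs) (x : Ω) : fs 0 x = 0 ∨ ∑ i : Fin n, fs i.succ x = 0 :=
  or_iff_not_imp_left.2 fun h0 =>
    Finset.sum_eq_zero fun i _ => (h i.succ 0 (Fin.succ_ne_zero i) x).resolve_right h0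

/-! ### Functionals with an upper estimate -/

section Functionals

variable {Ω : Type*} [MeasurableSpace Ω]

theorem sum_rpow_le_rpow_sum_of_add {V : (Ω → ℝ) → ℝ≥0∞} {q : ℝ}
    (hV : ∀ ⦃u v : Ω → ℝ⦄, Measurable u → Measurable v → (∀ x, u x = 0 ∨ v x = 0) →
      V u ^ q + V v ^ q ≤ V (fun x => u x + v x) ^ q) :
    ∀ {n : ℕ} {fs : Fin n → Ω → ℝ}, (∀ i, Measurable (fs i)) → DisjSupp fs →
      ∑ i, V (fs i) ^ q ≤ V (fun x => ∑ i, fs i x) ^ q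
  | 0, _, _, _ => by simp
  | n + 1, fs, hm, hd => by
    simp only [Fin.sum_univ_succ]
    calc V (fs 0) ^ q + ∑ i : Fin n, V (fs i.succ) ^ q
        ≤ V (fs 0) ^ q + V (fun x => ∑ i : Fin n, fs i.succ x) ^ q :=
          add_le_add_right (sum_rpow_le_rpow_sum_of_add hV (fun i => hm i.succ) hd.tail) _
      _ ≤ _ := hV (hm 0) (Finset.measurable_sum _ fun i _ => hm i.succ) hd.head_or_sum_tail

theorem absHomogeneous_of_forall_le {V : (Ω → ℝ) → ℝ≥0∞}
    (h : ∀ (c : ℝ) ⦃f : Ω → ℝ⦄, Measurable f → V (fun x => c * f x) ≤ ENNReal.ofReal |c| * V f)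
    (c : ℝ) {f : Ω → ℝ} (hf : Measurable f) :
    V (fun x => c * f x) = ENNReal.ofReal |c| * V f := by
  rcases eq_or_ne c 0 with rfl | hc
  · exact le_antisymm (by simpa using h 0 hf) (by simp)
  refine le_antisymm (h c hf) ?_
  have hinv := h c⁻¹ (hf.const_mul c)
  simp only [← mul_assoc, inv_mul_cancel₀ hc, one_mul] at hinv
  calc ENNReal.ofReal |c| * V f
      ≤ ENNReal.ofReal |c| * (ENNReal.ofReal |c⁻¹| * V fun x => c * f x) := by gcongr
    _ = V (fun x => c * f x) := by
      rw [← mul_assoc, ← ENNReal.ofReal_mul (abs_nonneg c), abs_inv,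
        mul_inv_cancel₀ (abs_ne_zero.2 hc), ENNReal.ofReal_one, one_mul]

structure HasUpperEstimate (p : ℝ) (V : (Ω → ℝ) → ℝ≥0∞) : Prop where
  mono ⦃f g : Ω → ℝ⦄ : Measurable f → Measurable g → (∀ x, |f x| ≤ |g x|) → V f ≤ V g
  smul (c : ℝ) ⦃f : Ω → ℝ⦄ : Measurable f →
    V (fun x => c * f x) = ENNReal.ofReal |c| * V f
  add_rpow_le ⦃u v : Ω → ℝ⦄ : Measurable u → Measurable v → (∀ x, u x = 0 ∨ v x = 0) →
    V (fun x => u x + v x) ^ p ≤ V u ^ p + V v ^ p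

namespace HasUpperEstimate

variable {p : ℝ} {V : (Ω → ℝ) → ℝ≥0∞}

theorem abs_eq (hV : HasUpperEstimate p V) {f : Ω → ℝ} (hf : Measurable f) :
    V (fun x => |f x|) = V f :=
  le_antisymm (hV.mono hf.abs hf fun x => by simp) (hV.mono hf hf.abs fun x => by simp)

theorem zero (hV : HasUpperEstimate p V) : V (fun _ => 0) = 0 := by
  simpa using hV.smul 0 (measurable_const (a := (0 : ℝ)))

theorem congr (hV : HasUpperEstimate p V) {V' : (Ω → ℝ) → ℝ≥0∞}
    (h : ∀ f, Measurable f → V' f = V f) : HasUpperEstimate p V' where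
  mono f g hf hg hfg := by rw [h f hf, h g hg]; exact hV.mono hf hg hfg
  smul c f hf := by rw [h _ (hf.const_mul c), h f hf]; exact hV.smul c hf
  add_rpow_le u v hu hv huv := by
    rw [h (fun x => u x + v x) (hu.add hv), h u hu, h v hv]; exact hV.add_rpow_le hu hv huv

theorem const_mul (hV : HasUpperEstimate p V) (hp : 0 ≤ p) (k : ℝ≥0∞) :
    HasUpperEstimate p fun f => k * V f where
  mono f g hf hg hfg := by gcongr; exact hV.mono hf hg hfg
  smul c f hf := by simp only [hV.smul c hf, mul_left_comm]
  add_rpow_le u v hu hv huv := by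
    simp only [ENNReal.mul_rpow_of_nonneg _ _ hp, ← mul_add]
    gcongr
    exact hV.add_rpow_le hu hv huv

theorem sInf (hp : 0 < p) {s : Set ((Ω → ℝ) → ℝ≥0∞)} (hne : s.Nonempty)
    (hchain : IsChain (· ≤ ·) s) (hs : ∀ V ∈ s, HasUpperEstimate p V) :
    HasUpperEstimate p (sInf s) := by
  have : Nonempty s := hne.to_subtype
  have hs_apply (f : Ω → ℝ) : InfSet.sInf s f = ⨅ V : s, V.1 f := sInf_apply
  refine ⟨fun f g hf hg hfg => ?_, fun c f hf => ?_, fun u v hu hv huv => ?_⟩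
  · simp only [hs_apply]
    exact iInf_mono fun V => (hs V V.2).mono hf hg hfg
  · simp only [hs_apply, fun V : s => (hs V V.2).smul c hf]
    exact (ENNReal.mul_iInf' (by simp) fun _ => inferInstance).symm
  · simp only [hs_apply, ENNReal.iInf_rpow _ hp]
    calc ⨅ V : s, V.1 (fun x => u x + v x) ^ p
        ≤ ⨅ V : s, (V.1 u ^ p + V.1 v ^ p) :=
          iInf_mono fun V => (hs V V.2).add_rpow_le hu hv huv
      _ = (⨅ V : s, V.1 u ^ p) + ⨅ V : s, V.1 v ^ p := by
        refine (ENNReal.iInf_add_iInf fun V W => ?_).symm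
        rcases hchain.total V.2 W.2 with h | h
        · exact ⟨V, by gcongr; exact h v⟩
        · exact ⟨W, by gcongr; exact h u⟩

theorem le_two_rpow_mul (hV : HasUpperEstimate p V) (hp : 0 < p) {u v : Ω → ℝ}
    (hu : Measurable u) (hv : Measurable v) (huv : ∀ x, u x = 0 ∨ v x = 0) :
    V (fun x => u x + v x) ≤ 2 ^ (1 / p) * (V u + V v) := by
  have h2 : V u ^ p + V v ^ p ≤ 2 * (V u + V v) ^ p := by
    rw [two_mul]
    gcongr
    exacts [le_self_add, le_add_self]
  calc V (fun x => u x + v x) = (V (fun x => u x + v x) ^ p) ^ (1 / p) := by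
        rw [one_div, ENNReal.rpow_rpow_inv hp.ne']
    _ ≤ (2 * (V u + V v) ^ p) ^ (1 / p) := by gcongr; exact (hV.add_rpow_le hu hv huv).trans h2
    _ = 2 ^ (1 / p) * (V u + V v) := by
      rw [ENNReal.mul_rpow_of_nonneg _ _ (by positivity), one_div, ENNReal.rpow_rpow_inv hp.ne']

theorem rpow_sum_le (hV : HasUpperEstimate p V) (hp : 0 < p) :
    ∀ {n : ℕ} {fs : Fin n → Ω → ℝ}, (∀ i, Measurable (fs i)) → DisjSupp fs →
      V (fun x => ∑ i, fs i x) ^ p ≤ ∑ i, V (fs i) ^ p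
  | 0, _, _, _ => by simp [hV.zero, ENNReal.zero_rpow_of_pos hp]
  | n + 1, fs, hm, hd => by
    simp only [Fin.sum_univ_succ]
    calc V (fun x => fs 0 x + ∑ i : Fin n, fs i.succ x) ^ p
        ≤ V (fs 0) ^ p + V (fun x => ∑ i : Fin n, fs i.succ x) ^ p :=
          hV.add_rpow_le (hm 0) (Finset.measurable_sum _ fun i _ => hm i.succ)
            hd.head_or_sum_tail
      _ ≤ _ := add_le_add_right (hV.rpow_sum_le hp (fun i => hm i.succ) hd.tail) _

end HasUpperEstimate

end Functionals

section Renorms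

variable {Ω : Type*} [MeasurableSpace Ω]

instance : Nonempty (FinMeasPartition Ω) := ⟨FinMeasPartition.indiscrete⟩

/-- For monotone `V`, the largest minorant of `V` with an upper `p`-estimate. -/
noncomputable def infRenorm (V : (Ω → ℝ) → ℝ≥0∞) (p : ℝ) (f : Ω → ℝ) : ℝ≥0∞ :=
  (⨅ π : FinMeasPartition Ω, ∑ i, V ((π.cell i).indicator f) ^ p) ^ (1 / p)

/-- For monotone `V`, the smallest majorant of `V` with a lower `q`-estimate. -/
noncomputable def supRenorm (V : (Ω → ℝ) → ℝ≥0∞) (q : ℝ) (f : Ω → ℝ) : ℝ≥0∞ :=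
  (⨆ π : FinMeasPartition Ω, ∑ i, V ((π.cell i).indicator f) ^ q) ^ (1 / q)

variable {V : (Ω → ℝ) → ℝ≥0∞} {p q : ℝ}

theorem rpow_infRenorm (hp : p ≠ 0) (f : Ω → ℝ) :
    infRenorm V p f ^ p = ⨅ π : FinMeasPartition Ω, ∑ i, V ((π.cell i).indicator f) ^ p := by
  rw [infRenorm, one_div, ENNReal.rpow_inv_rpow hp]

theorem rpow_supRenorm (hq : q ≠ 0) (f : Ω → ℝ) :
    supRenorm V q f ^ q = ⨆ π : FinMeasPartition Ω, ∑ i, V ((π.cell i).indicator f) ^ q := by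
  rw [supRenorm, one_div, ENNReal.rpow_inv_rpow hq]

theorem sum_rpow_indicator_const_mul
    (hV : ∀ (c : ℝ) ⦃f : Ω → ℝ⦄, Measurable f → V (fun x => c * f x) = ENNReal.ofReal |c| * V f)
    {r : ℝ} (hr : 0 ≤ r) (π : FinMeasPartition Ω) (c : ℝ) {f : Ω → ℝ} (hf : Measurable f) :
    ∑ i, V ((π.cell i).indicator fun x => c * f x) ^ r =
      ENNReal.ofReal |c| ^ r * ∑ i, V ((π.cell i).indicator f) ^ r := by
  rw [Finset.mul_sum]
  refine Finset.sum_congr rfl fun i _ => ?_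
  rw [← ENNReal.mul_rpow_of_nonneg _ _ hr, ← hV c (hf.indicator (π.measurableSet_cell i))]
  exact congrArg (V · ^ r) (funext (indicator_const_mul _ _ _))

theorem infRenorm_le (hp : 0 < p) (f : Ω → ℝ) : infRenorm V p f ≤ V f :=
  calc infRenorm V p f
      ≤ (∑ i, V ((FinMeasPartition.indiscrete.cell i).indicator f) ^ p) ^ (1 / p) := by
        unfold infRenorm; gcongr; exact iInf_le _ _
    _ = V f := by
      rw [FinMeasPartition.sum_indiscrete (fun g => V g ^ p), one_div, ENNReal.rpow_rpow_inv hp.ne']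

end Renorms

section Quasinorm

variable {Ω : Type*} [TopologicalSpace Ω] [MeasurableSpace Ω] {X : AdmissibleQuasinorm Ω}
  {p q a b : ℝ}

theorem AdmissibleQuasinorm.abs_eq (X : AdmissibleQuasinorm Ω) {f : Ω → ℝ}
    (hf : Measurable f) : X.N (fun x => |f x|) = X.N f :=
  le_antisymm (X.mono _ _ hf.abs hf fun x => by simp) (X.mono _ _ hf hf.abs fun x => by simp)

theorem CrudeUpper.le_partition (hXa : CrudeUpper X p a) {f : Ω → ℝ} (hf : Measurable f)
    (π : FinMeasPartition Ω) :
    X.N f ≤ ENNReal.ofReal a * (∑ i, X.N ((π.cell i).indicator f) ^ p) ^ (1 / p) := by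
  simpa only [π.sum_indicator_cell] using
    hXa π.n _ (fun i => hf.indicator (π.measurableSet_cell i)) (π.disjSupp_indicator_cell f)

theorem CrudeLower.partition_le (hXb : CrudeLower X q b) {f : Ω → ℝ} (hf : Measurable f)
    (π : FinMeasPartition Ω) :
    (∑ i, X.N ((π.cell i).indicator f) ^ q) ^ (1 / q) ≤ ENNReal.ofReal b * X.N f := by
  simpa only [π.sum_indicator_cell] using
    hXb π.n _ (fun i => hf.indicator (π.measurableSet_cell i)) (π.disjSupp_indicator_cell f)

theorem CrudeUpper.le_mul_infRenorm (hXa : CrudeUpper X p a) (hp : 0 < p) {f : Ω → ℝ}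
    (hf : Measurable f) : X.N f ≤ ENNReal.ofReal a * infRenorm X.N p f := by
  rw [infRenorm, ENNReal.iInf_rpow _ (one_div_pos.2 hp),
    ENNReal.mul_iInf' (by simp) fun _ => inferInstance]
  exact le_iInf (hXa.le_partition hf)

theorem hasUpperEstimate_infRenorm (hp : 0 < p) : HasUpperEstimate p (infRenorm X.N p) where
  mono f g hf hg hfg := by
    unfold infRenorm
    gcongr with π i
    exact X.mono _ _ (hf.indicator (π.measurableSet_cell i))
      (hg.indicator (π.measurableSet_cell i)) (abs_indicator_le_abs_indicator hfg _)
  smul c f hf := by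
    simp only [infRenorm, sum_rpow_indicator_const_mul (fun c f hf => X.smul c f hf) hp.le _ c hf]
    rw [← ENNReal.mul_iInf' (fun h => absurd h (by simp [hp.le])) fun _ => inferInstance,
      ENNReal.mul_rpow_of_nonneg _ _ (by positivity), one_div, ENNReal.rpow_rpow_inv hp.ne']
  add_rpow_le u v hu hv huv := by
    simp only [rpow_infRenorm hp.ne', ENNReal.iInf_add, ENNReal.add_iInf]
    refine le_iInf₂ fun ρ π => ?_
    exact (iInf_le _ (π.piecewise _ (hv (measurableSet_singleton 0)) ρ)).trans_eq
      (FinMeasPartition.sum_piecewise_indicator_add hv huv π ρ (fun g => X.N g ^ p))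

end Quasinorm

/-! ### Fatou regularization -/

section Fatou

variable {Ω : Type*} [MeasurableSpace Ω]

structure IncrApprox (f : Ω → ℝ) where
  seq : ℕ → Ω → ℝ
  measurable (k : ℕ) : Measurable (seq k)
  nonneg (k : ℕ) (x : Ω) : 0 ≤ seq k x
  le_succ (k : ℕ) (x : Ω) : seq k x ≤ seq (k + 1) x
  tendsto (x : Ω) : Tendsto (fun k => seq k x) atTop (𝓝 |f x|)

namespace IncrApprox

variable {f g : Ω → ℝ}

theorem monotone (s : IncrApprox f) (x : Ω) : Monotone fun k => s.seq k x :=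
  monotone_nat_of_le_succ fun k => s.le_succ k x

theorem monotone_apply {V : (Ω → ℝ) → ℝ≥0∞}
    (hmono : ∀ ⦃f g : Ω → ℝ⦄, Measurable f → Measurable g → (∀ x, |f x| ≤ |g x|) → V f ≤ V g)
    (s : IncrApprox f) : Monotone fun k => V (s.seq k) :=
  monotone_nat_of_le_succ fun k => hmono (s.measurable k) (s.measurable (k + 1)) fun x => by
    rw [abs_of_nonneg (s.nonneg k x), abs_of_nonneg (s.nonneg (k + 1) x)]
    exact s.le_succ k x

theorem le_abs (s : IncrApprox f) (k : ℕ) (x : Ω) : s.seq k x ≤ |f x| :=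
  (s.monotone x).ge_of_tendsto (s.tendsto x) k

def const (hf : Measurable f) : IncrApprox f :=
  ⟨fun _ x => |f x|, fun _ => hf.abs, fun _ _ => abs_nonneg _, fun _ _ => le_rfl,
    fun _ => tendsto_const_nhds⟩

def ofTendsto {fs : ℕ → Ω → ℝ} (hfs : ∀ n, Measurable (fs n)) (h0 : ∀ n x, 0 ≤ fs n x)
    (hle : ∀ n x, fs n x ≤ fs (n + 1) x) (hlim : ∀ x, Tendsto (fun n => fs n x) atTop (𝓝 (g x))) :
    IncrApprox g where
  seq := fs
  measurable := hfs
  nonneg := h0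
  le_succ := hle
  tendsto x := by
    rw [abs_of_nonneg (ge_of_tendsto' (hlim x) fun n => h0 n x)]
    exact hlim x

noncomputable def indicator (s : IncrApprox f) {A : Set Ω} (hA : MeasurableSet A) :
    IncrApprox (A.indicator f) where
  seq k := A.indicator (s.seq k)
  measurable k := (s.measurable k).indicator hA
  nonneg k := indicator_nonneg fun x _ => s.nonneg k x
  le_succ k _ := indicator_le_indicator (s.le_succ k _)
  tendsto x := by
    by_cases hx : x ∈ A
    · simpa [hx] using s.tendsto x
    · simp [hx]

def min (s : IncrApprox g) (hf : Measurable f) (hfg : ∀ x, |f x| ≤ |g x|) : IncrApprox f where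
  seq k x := Min.min (s.seq k x) |f x|
  measurable k := (s.measurable k).min hf.abs
  nonneg k x := le_min (s.nonneg k x) (abs_nonneg _)
  le_succ k x := min_le_min_right _ (s.le_succ k x)
  tendsto x := by
    simpa [min_eq_right (hfg x)] using (s.tendsto x).min (tendsto_const_nhds (x := |f x|))

def constMul (s : IncrApprox f) (c : ℝ) : IncrApprox fun x => c * f x where
  seq k x := |c| * s.seq k x
  measurable k := (s.measurable k).const_mul _
  nonneg k x := mul_nonneg (abs_nonneg c) (s.nonneg k x)
  le_succ k x := mul_le_mul_of_nonneg_left (s.le_succ k x) (abs_nonneg c)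
  tendsto x := by simpa [abs_mul] using (s.tendsto x).const_mul |c|

def add (s : IncrApprox f) (t : IncrApprox g) (hfg : ∀ x, f x = 0 ∨ g x = 0) :
    IncrApprox fun x => f x + g x where
  seq k x := s.seq k x + t.seq k x
  measurable k := (s.measurable k).add (t.measurable k)
  nonneg k x := add_nonneg (s.nonneg k x) (t.nonneg k x)
  le_succ k x := add_le_add (s.le_succ k x) (t.le_succ k x)
  tendsto x := by
    have habs : |f x + g x| = |f x| + |g x| := by rcases hfg x with h | h <;> simp [h]
    simpa [habs] using (s.tendsto x).add (t.tendsto x)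

theorem disjoint (s : IncrApprox f) (t : IncrApprox g) (hfg : ∀ x, f x = 0 ∨ g x = 0) (k : ℕ)
    (x : Ω) : s.seq k x = 0 ∨ t.seq k x = 0 :=
  (hfg x).imp (fun h => le_antisymm (by simpa [h] using s.le_abs k x) (s.nonneg k x))
    fun h => le_antisymm (by simpa [h] using t.le_abs k x) (t.nonneg k x)

end IncrApprox

noncomputable def fatouReg (V : (Ω → ℝ) → ℝ≥0∞) (f : Ω → ℝ) : ℝ≥0∞ :=
  ⨅ s : IncrApprox f, ⨆ k, V (s.seq k)

variable {V : (Ω → ℝ) → ℝ≥0∞} {p : ℝ}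

theorem fatouReg_le {f : Ω → ℝ} (s : IncrApprox f) : fatouReg V f ≤ ⨆ k, V (s.seq k) :=
  iInf_le _ s

theorem fatouReg_monotone : Monotone (fatouReg (Ω := Ω)) :=
  fun _ _ h _ => iInf_mono fun _ => iSup_mono fun _ => h _

namespace HasUpperEstimate

theorem fatouReg_le_self (hV : HasUpperEstimate p V) {f : Ω → ℝ} (hf : Measurable f) :
    fatouReg V f ≤ V f :=
  (fatouReg_le (IncrApprox.const hf)).trans (by simp [IncrApprox.const, hV.abs_eq hf])

theorem fatouReg_add_rpow_le (hV : HasUpperEstimate p V) (hp : 0 < p) {u v : Ω → ℝ}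
    (huv : ∀ x, u x = 0 ∨ v x = 0) :
    fatouReg V (fun x => u x + v x) ^ p ≤ fatouReg V u ^ p + fatouReg V v ^ p := by
  simp only [fatouReg, ENNReal.iInf_rpow _ hp, ENNReal.iInf_add, ENNReal.add_iInf]
  refine le_iInf₂ fun t s => (iInf_le _ (s.add t huv)).trans ?_
  simp only [ENNReal.iSup_rpow _ hp]
  refine iSup_le fun k => (hV.add_rpow_le (s.measurable k) (t.measurable k)
    (s.disjoint t huv k)).trans ?_
  exact add_le_add (le_iSup (fun k => V (s.seq k) ^ p) k) (le_iSup (fun k => V (t.seq k) ^ p) k)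

theorem fatouReg (hV : HasUpperEstimate p V) (hp : 0 < p) : HasUpperEstimate p (fatouReg V) where
  mono f g hf hg hfg := le_iInf fun s => (fatouReg_le (s.min hf hfg)).trans <|
    iSup_mono fun k => hV.mono ((s.measurable k).min hf.abs) (s.measurable k) fun x => by
      rw [abs_of_nonneg ((s.min hf hfg).nonneg k x), abs_of_nonneg (s.nonneg k x)]
      exact min_le_left _ _
  smul := absHomogeneous_of_forall_le fun c f hf => by
    calc _root_.fatouReg V (fun x => c * f x)
        ≤ ⨅ s : IncrApprox f, ENNReal.ofReal |c| * ⨆ k, V (s.seq k) :=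
          le_iInf fun s => (fatouReg_le (s.constMul c)).trans_eq <| by
            simp only [IncrApprox.constMul, hV.smul |c| (s.measurable _), abs_abs,
              ENNReal.mul_iSup]
      _ = _ := (ENNReal.mul_iInf' (by simp) fun _ => ⟨IncrApprox.const hf⟩).symm
  add_rpow_le _ _ _ _ huv := hV.fatouReg_add_rpow_le hp huv

end HasUpperEstimate

theorem tendsto_of_le_fatouReg
    (hmono : ∀ ⦃f g : Ω → ℝ⦄, Measurable f → Measurable g → (∀ x, |f x| ≤ |g x|) → V f ≤ V g)
    (hV : ∀ f, V f ≤ fatouReg V f) {fs : ℕ → Ω → ℝ} {g : Ω → ℝ} (hfs : ∀ n, Measurable (fs n))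
    (hg : Measurable g) (h0 : ∀ n x, 0 ≤ fs n x) (hle : ∀ n x, fs n x ≤ fs (n + 1) x)
    (hlim : ∀ x, Tendsto (fun n => fs n x) atTop (𝓝 (g x))) :
    Tendsto (fun n => V (fs n)) atTop (𝓝 (V g)) := by
  set s := IncrApprox.ofTendsto hfs h0 hle hlim
  have hle_g (n : ℕ) : V (fs n) ≤ V g :=
    hmono (hfs n) hg fun x => by rw [abs_of_nonneg (h0 n x)]; exact s.le_abs n x
  have hsup : ⨆ n, V (fs n) = V g := le_antisymm (iSup_le hle_g) ((hV g).trans (fatouReg_le s))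
  exact hsup ▸ tendsto_atTop_iSup (s.monotone_apply hmono)

end Fatou

section FatouQuasinorm

variable {Ω : Type*} [TopologicalSpace Ω] [MeasurableSpace Ω] {X : AdmissibleQuasinorm Ω}
  {V : (Ω → ℝ) → ℝ≥0∞}

theorem AdmissibleQuasinorm.iSup_eq (X : AdmissibleQuasinorm Ω) {f : Ω → ℝ} (hf : Measurable f)
    (s : IncrApprox f) : ⨆ k, X.N (s.seq k) = X.N f := by
  rw [← X.abs_eq hf]
  exact tendsto_nhds_unique (tendsto_atTop_iSup (s.monotone_apply fun f g => X.mono f g))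
    (X.cont _ _ s.measurable hf.abs s.nonneg s.le_succ s.tendsto)

theorem le_fatouReg (hVX : ∀ f, Measurable f → X.N f ≤ V f) {f : Ω → ℝ} (hf : Measurable f) :
    X.N f ≤ fatouReg V f :=
  le_iInf fun s => (X.iSup_eq hf s).symm.trans_le (iSup_mono fun k => hVX _ (s.measurable k))

end FatouQuasinorm

section FatouRenorm

variable {Ω : Type*} [TopologicalSpace Ω] [MeasurableSpace Ω] {X : AdmissibleQuasinorm Ω}
  {p a : ℝ}

noncomputable def fatouStep (X : AdmissibleQuasinorm Ω) (p a : ℝ) :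
    ((Ω → ℝ) → ℝ≥0∞) →o ((Ω → ℝ) → ℝ≥0∞) where
  toFun V := (fun f => ENNReal.ofReal a * infRenorm X.N p f) ⊓ fatouReg V
  monotone' _ _ h := inf_le_inf_left _ (fatouReg_monotone h)

noncomputable def fatouRenorm (X : AdmissibleQuasinorm Ω) (p a : ℝ) : (Ω → ℝ) → ℝ≥0∞ :=
  (fatouStep X p a).gfp

theorem fatouRenorm_le_fatouReg (f : Ω → ℝ) :
    fatouRenorm X p a f ≤ fatouReg (fatouRenorm X p a) f :=
  (congrFun (fatouStep X p a).map_gfp f).ge.trans inf_le_right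

theorem fatouRenorm_le_mul_infRenorm (f : Ω → ℝ) :
    fatouRenorm X p a f ≤ ENNReal.ofReal a * infRenorm X.N p f :=
  (congrFun (fatouStep X p a).map_gfp f).ge.trans inf_le_left

theorem hasUpperEstimate_fatouRenorm (hp : 0 < p) : HasUpperEstimate p (fatouRenorm X p a) := by
  refine (fatouStep X p a).gfp_induction_of_isChain ?_ (fun V hV hVtop => ?_)
    fun s hne hchain hs => .sInf hp hne hchain hs
  · have htop : fatouStep X p a ⊤ = fun f => ENNReal.ofReal a * infRenorm X.N p f := by
      ext f
      change _ ⊓ fatouReg ⊤ f = _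
      simp [fatouReg]
    exact htop ▸ (hasUpperEstimate_infRenorm hp).const_mul hp.le _
  · refine (hV.fatouReg hp).congr fun f hf => inf_eq_right.2 ?_
    exact (hV.fatouReg_le_self hf).trans ((hVtop f).trans inf_le_left)

theorem le_fatouRenorm (hp : 0 < p) (hXa : CrudeUpper X p a) {f : Ω → ℝ} (hf : Measurable f) :
    X.N f ≤ fatouRenorm X p a f := by
  suffices h : ∀ g, Measurable g → X.N g ≤ fatouRenorm X p a g from h f hf
  refine (fatouStep X p a).gfp_induction (p := fun V => ∀ f, Measurable f → X.N f ≤ V f)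
    (fun V hXV _ f hf => le_inf (hXa.le_mul_infRenorm hp hf) (le_fatouReg hXV hf))
    fun s hs f hf => ?_
  rw [sInf_apply]
  exact le_iInf fun V => hs V V.2 f hf

end FatouRenorm

section SupRenorm

variable {Ω : Type*} [MeasurableSpace Ω] {V : (Ω → ℝ) → ℝ≥0∞} {p q : ℝ}

theorem le_supRenorm (hq : 0 < q) (f : Ω → ℝ) : V f ≤ supRenorm V q f :=
  calc V f = (∑ i, V ((FinMeasPartition.indiscrete.cell i).indicator f) ^ q) ^ (1 / q) := by
        rw [FinMeasPartition.sum_indiscrete (fun g => V g ^ q), one_div, ENNReal.rpow_rpow_inv hq.ne']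
    _ ≤ supRenorm V q f := by
      unfold supRenorm
      gcongr
      exact le_iSup (fun π : FinMeasPartition Ω => ∑ i, V ((π.cell i).indicator f) ^ q) _

theorem rpow_add_rpow_le_supRenorm (hq : q ≠ 0) {u v : Ω → ℝ} (hv : Measurable v)
    (huv : ∀ x, u x = 0 ∨ v x = 0) :
    supRenorm V q u ^ q + supRenorm V q v ^ q ≤ supRenorm V q (fun x => u x + v x) ^ q := by
  simp only [rpow_supRenorm hq]
  refine ENNReal.iSup_add_iSup_le fun π ρ => ?_
  rw [← FinMeasPartition.sum_piecewise_indicator_add hv huv π ρ (fun g => V g ^ q)]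
  exact le_iSup (fun σ : FinMeasPartition Ω => ∑ i, V ((σ.cell i).indicator _) ^ q) _

namespace HasUpperEstimate

/-- Minkowski's inequality in `ℓ^{q/p}` turns the upper `p`-estimate of `V` on each cell into
one for `supRenorm V q`. -/
theorem supRenorm_add_rpow_le (hV : HasUpperEstimate p V) (hp : 0 < p) (hpq : p < q)
    {u v : Ω → ℝ} (hu : Measurable u) (hv : Measurable v) (huv : ∀ x, u x = 0 ∨ v x = 0) :
    supRenorm V q (fun x => u x + v x) ^ p ≤ supRenorm V q u ^ p + supRenorm V q v ^ p := by
  set r := q / p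
  have hr : 1 ≤ r := (one_le_div hp).2 hpq.le
  have hpr : p * r = q := by simp only [r]; field_simp
  have hrpow (f : Ω → ℝ) : supRenorm V q f ^ p =
      ⨆ π : FinMeasPartition Ω, (∑ i, (V ((π.cell i).indicator f) ^ p) ^ r) ^ (1 / r) := by
    have hexp : 1 / q * p = 1 / r := by simp only [r]; field_simp
    simp only [supRenorm, ← ENNReal.rpow_mul, hexp, hpr,
      ENNReal.iSup_rpow _ (by positivity : 0 < 1 / r)]
  simp only [hrpow]
  refine iSup_le fun π => ?_
  calc (∑ i, (V ((π.cell i).indicator fun x => u x + v x) ^ p) ^ r) ^ (1 / r)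
      ≤ (∑ i, (V ((π.cell i).indicator u) ^ p + V ((π.cell i).indicator v) ^ p) ^ r) ^ (1 / r) := by
        gcongr with i
        rw [indicator_add]
        refine hV.add_rpow_le (hu.indicator (π.measurableSet_cell i))
          (hv.indicator (π.measurableSet_cell i)) fun x => ?_
        by_cases hx : x ∈ π.cell i <;> simp [hx, huv x]
    _ ≤ (∑ i, (V ((π.cell i).indicator u) ^ p) ^ r) ^ (1 / r) +
          (∑ i, (V ((π.cell i).indicator v) ^ p) ^ r) ^ (1 / r) := ENNReal.Lp_add_le _ _ _ hr
    _ ≤ _ := by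
        gcongr <;> exact le_iSup (fun σ : FinMeasPartition Ω =>
          (∑ i, (V ((σ.cell i).indicator _) ^ p) ^ r) ^ (1 / r)) π

theorem supRenorm (hV : HasUpperEstimate p V) (hp : 0 < p) (hpq : p < q) :
    HasUpperEstimate p (supRenorm V q) where
  mono f g hf hg hfg := by
    have hq : 0 < q := hp.trans hpq
    unfold _root_.supRenorm
    gcongr with π i
    exact hV.mono (hf.indicator (π.measurableSet_cell i)) (hg.indicator (π.measurableSet_cell i))
      (abs_indicator_le_abs_indicator hfg _)
  smul c f hf := by
    have hq : 0 < q := hp.trans hpq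
    simp only [_root_.supRenorm, sum_rpow_indicator_const_mul hV.smul hq.le _ c hf,
      ← ENNReal.mul_iSup]
    rw [ENNReal.mul_rpow_of_nonneg _ _ (by positivity), one_div, ENNReal.rpow_rpow_inv hq.ne']
  add_rpow_le _ _ hu hv huv := hV.supRenorm_add_rpow_le hp hpq hu hv huv

theorem supRenorm_le_fatouReg (hV : HasUpperEstimate p V) (hq : 0 < q)
    (hVF : ∀ f, V f ≤ _root_.fatouReg V f) (f : Ω → ℝ) :
    _root_.supRenorm V q f ≤ _root_.fatouReg (_root_.supRenorm V q) f := by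
  refine le_iInf fun s => ?_
  rw [← ENNReal.rpow_le_rpow_iff hq, ENNReal.iSup_rpow _ hq]
  simp only [rpow_supRenorm hq.ne']
  refine iSup_le fun π => ?_
  calc ∑ i, V ((π.cell i).indicator f) ^ q
      ≤ ∑ i, ⨆ k, V ((π.cell i).indicator (s.seq k)) ^ q := by
        gcongr with i
        rw [← ENNReal.iSup_rpow _ hq]
        gcongr
        exact (hVF _).trans (fatouReg_le (s.indicator (π.measurableSet_cell i)))
    _ = ⨆ k, ∑ i, V ((π.cell i).indicator (s.seq k)) ^ q :=
        ENNReal.finsetSum_iSup_of_monotone fun i _ _ hkl => ENNReal.rpow_le_rpow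
          ((s.indicator (π.measurableSet_cell i)).monotone_apply hV.mono hkl) hq.le
    _ ≤ ⨆ k, ⨆ σ : FinMeasPartition Ω, ∑ i, V ((σ.cell i).indicator (s.seq k)) ^ q :=
        iSup_mono fun k =>
          le_iSup (fun σ : FinMeasPartition Ω => ∑ i, V ((σ.cell i).indicator (s.seq k)) ^ q) π

end HasUpperEstimate

end SupRenorm

section Assembly

variable {Ω : Type*} [TopologicalSpace Ω] [MeasurableSpace Ω] {X : AdmissibleQuasinorm Ω}
  {V : (Ω → ℝ) → ℝ≥0∞} {p q b : ℝ}

theorem supRenorm_le_mul (hq : 0 < q) {C : ℝ≥0∞} (hVX : ∀ f, Measurable f → V f ≤ C * X.N f)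
    (hXb : CrudeLower X q b) {f : Ω → ℝ} (hf : Measurable f) :
    supRenorm V q f ≤ C * (ENNReal.ofReal b * X.N f) := by
  rw [supRenorm, ENNReal.iSup_rpow _ (one_div_pos.2 hq)]
  refine iSup_le fun π => ?_
  calc (∑ i, V ((π.cell i).indicator f) ^ q) ^ (1 / q)
      ≤ (∑ i, (C * X.N ((π.cell i).indicator f)) ^ q) ^ (1 / q) := by
        gcongr with i
        exact hVX _ (hf.indicator (π.measurableSet_cell i))
    _ = C * (∑ i, X.N ((π.cell i).indicator f) ^ q) ^ (1 / q) := by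
        simp only [ENNReal.mul_rpow_of_nonneg _ _ hq.le, ← Finset.mul_sum]
        rw [ENNReal.mul_rpow_of_nonneg _ _ (by positivity), one_div, ENNReal.rpow_rpow_inv hq.ne']
    _ ≤ C * (ENNReal.ofReal b * X.N f) := by gcongr; exact hXb.partition_le hf π

theorem supRenorm_fatouRenorm_le {a : ℝ} (hp : 0 < p) (hq : 0 < q) (hXb : CrudeLower X q b)
    {f : Ω → ℝ} (hf : Measurable f) :
    supRenorm (fatouRenorm X p a) q f ≤ ENNReal.ofReal (a * b) * X.N f := by
  refine (supRenorm_le_mul hq (C := ENNReal.ofReal a) (fun g _ => ?_) hXb hf).trans ?_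
  · exact (fatouRenorm_le_mul_infRenorm g).trans (by gcongr; exact infRenorm_le hp g)
  · rw [← mul_assoc]
    gcongr
    exact ENNReal.ofReal_mul_ofReal_le a b

theorem crudeUpper_one_of_hasUpperEstimate {Y : AdmissibleQuasinorm Ω} (hp : 0 < p)
    (hY : HasUpperEstimate p Y.N) : CrudeUpper Y p 1 := fun _ _ hm hd => by
  rw [ENNReal.ofReal_one, one_mul, ← ENNReal.rpow_le_rpow_iff hp, one_div,
    ENNReal.rpow_inv_rpow hp.ne']
  exact hY.rpow_sum_le hp hm hd

theorem crudeLower_one_of_add {Y : AdmissibleQuasinorm Ω} (hq : 0 < q)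
    (hY : ∀ ⦃u v : Ω → ℝ⦄, Measurable u → Measurable v → (∀ x, u x = 0 ∨ v x = 0) →
      Y.N u ^ q + Y.N v ^ q ≤ Y.N (fun x => u x + v x) ^ q) : CrudeLower Y q 1 :=
  fun _ _ hm hd => by
    rw [ENNReal.ofReal_one, one_mul, ← ENNReal.rpow_le_rpow_iff hq, one_div,
      ENNReal.rpow_inv_rpow hq.ne']
    exact sum_rpow_le_rpow_sum_of_add hY hm hd

end Assembly

theorem renorm_exact_upper_lower_estimates_general
    {Ω : Type*} [TopologicalSpace Ω] [MeasurableSpace Ω]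
    (p q a b : ℝ) (hp : 0 < p) (hpq : p < q)
    (X : AdmissibleQuasinorm Ω)
    (hXa : CrudeUpper X p a) (hXb : CrudeLower X q b) :
    ∃ Y : AdmissibleQuasinorm Ω,
      CrudeUpper Y p 1 ∧ CrudeLower Y q 1 ∧
      ∀ f : Ω → ℝ, Measurable f →
        X.N f ≤ Y.N f ∧ Y.N f ≤ ENNReal.ofReal (a * b) * X.N f := by
  have hq : 0 < q := hp.trans hpq
  have hW : HasUpperEstimate p (fatouRenorm X p a) := hasUpperEstimate_fatouRenorm hp
  have hY := hW.supRenorm hp hpq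
  have hXY (f : Ω → ℝ) (hf : Measurable f) : X.N f ≤ supRenorm (fatouRenorm X p a) q f :=
    (le_fatouRenorm hp hXa hf).trans (le_supRenorm hq f)
  have hYX (f : Ω → ℝ) (hf : Measurable f) := supRenorm_fatouRenorm_le (a := a) hp hq hXb hf
  obtain ⟨u, hu, hu0, hupos, hutop⟩ := X.exists_pos
  refine ⟨{ N := supRenorm (fatouRenorm X p a) q
            mono := fun _ _ hf hg => hY.mono hf hg
            smul := fun c _ hf => hY.smul c hf
            quasi := ⟨_, fun _ _ hf hg _ _ => hY.le_two_rpow_mul hp hf hg⟩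
            exists_pos := ⟨u, hu, hu0, hupos.trans_le (hXY u hu),
              (hYX u hu).trans_lt (ENNReal.mul_lt_top ENNReal.ofReal_lt_top hutop)⟩
            cont := fun _ _ hfs hg => tendsto_of_le_fatouReg hY.mono
              (hW.supRenorm_le_fatouReg hq fatouRenorm_le_fatouReg) hfs hg },
    crudeUpper_one_of_hasUpperEstimate hp hY,
    crudeLower_one_of_add hq fun _ _ _ hv => rpow_add_rpow_le_supRenorm hq.ne' hv,
    fun f hf => ⟨hXY f hf, hYX f hf⟩⟩

/-- A quasinorm with a crude upper `p`-estimate (constant `a`) and a crude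
lower `q`-estimate (constant `b`) admits an equivalent quasinorm with exact upper `p` and
lower `q` estimates, with `‖f‖_X ≤ ‖f‖_Y ≤ ab ‖f‖_X`. -/
theorem renorm_exact_upper_lower_estimates
    {Ω : Type*} [TopologicalSpace Ω] [CompactSpace Ω] [T2Space Ω]
    [MeasurableSpace Ω] [BorelSpace Ω]
    (p q a b : ℝ) (hp : 0 < p) (hpq : p < q)
    (X : AdmissibleQuasinorm Ω)
    (hXa : CrudeUpper X p a) (hXb : CrudeLower X q b) :
    ∃ Y : AdmissibleQuasinorm Ω,
      CrudeUpper Y p 1 ∧ CrudeLower Y q 1 ∧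
      ∀ f : Ω → ℝ, Measurable f →
        X.N f ≤ Y.N f ∧ Y.N f ≤ ENNReal.ofReal (a * b) * X.N f :=
  renorm_exact_upper_lower_estimates_general p q a b hp hpq X hXa hXb
end

section
/- Suppose 0 < p < q < ∞ and μ is a finite Borel measure on a compact Hausdorff space Ω. Then the Λ_{p,q}(μ)-quasinorm is the smallest admissible quasinorm with the following properties: (1) ‖·‖_{Λ_{p,q}} is monotone and homogeneous, satisfies a lower q-estimate ((Σ_i ‖f_i‖_{Λ_{p,q}}^q)^{1/q} ≤ ‖f_1 + ⋯ + f_n‖_{Λ_{p,q}} for disjointly supported f_i), and ‖χ_A‖_{Λ_{p,q}} ≥ μ(A)^{1/p} for every Borel set A; (2) if N : B(Ω) → [0, ∞] is any monotone homogeneous functional satisfying a lower q-estimate and N(χ_A) ≥ μ(A)^{1/p} for all Borel A, then N(f) ≥ ‖f‖_{Λ_{p,q}} for all Borel f. -/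
open Set Filter Topology MeasureTheory ENNReal

/-- `A : Fin n → Set Ω` is a finite Borel partition of `Ω`. -/
def IsBorelPartition {Ω : Type*} [MeasurableSpace Ω] {n : ℕ} (A : Fin n → Set Ω) : Prop :=
  (∀ i, MeasurableSet (A i)) ∧ Pairwise (Function.onFun Disjoint A) ∧ (⋃ i, A i) = univ

/-- The `Λ_{p,q}(μ)` functional for `p < q`:
`sup (Σᵢ (inf_{ω ∈ Aᵢ} |f ω|)^q μ(Aᵢ)^{q/p})^{1/q}` over finite Borel partitions. -/
noncomputable def LambdaSup {Ω : Type*} [MeasurableSpace Ω]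
    (μ : Measure Ω) (p q : ℝ) (f : Ω → ℝ) : ℝ≥0∞ :=
  ⨆ (n : ℕ) (A : Fin n → Set Ω) (_ : IsBorelPartition A),
    (∑ i, (⨅ x ∈ A i, ENNReal.ofReal |f x|) ^ q * μ (A i) ^ (q / p)) ^ (1 / q)

/-- The `Λ_{p,q}(μ)` functional for `q < p`:
`inf (Σᵢ (sup_{ω ∈ Aᵢ} |f ω|)^q μ(Aᵢ)^{q/p})^{1/q}` over finite Borel partitions.
(Here `LambdaInf μ p q` has inner exponent `q` and measure exponent `q/p`.) -/
noncomputable def LambdaInf {Ω : Type*} [MeasurableSpace Ω]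
    (μ : Measure Ω) (p q : ℝ) (f : Ω → ℝ) : ℝ≥0∞ :=
  ⨅ (n : ℕ) (A : Fin n → Set Ω) (_ : IsBorelPartition A),
    (∑ i, (⨆ x ∈ A i, ENNReal.ofReal |f x|) ^ q * μ (A i) ^ (q / p)) ^ (1 / q)

/-- The decreasing rearrangement `f*(t) = inf_{μ(E) ≤ t} sup_{ω ∉ E} |f ω|`. -/
noncomputable def decRearr {Ω : Type*} [MeasurableSpace Ω]
    (μ : Measure Ω) (f : Ω → ℝ) (t : ℝ) : ℝ≥0∞ :=
  ⨅ (E : Set Ω) (_ : MeasurableSet E) (_ : μ E ≤ ENNReal.ofReal t),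
    ⨆ x ∈ Eᶜ, ENNReal.ofReal |f x|

/-- The Lorentz quasinorm `‖f‖_{L_{p,q}(μ)} = (∫₀^∞ (q/p) t^{q/p-1} f*(t)^q dt)^{1/q}`. -/
noncomputable def LorentzNorm {Ω : Type*} [MeasurableSpace Ω]
    (μ : Measure Ω) (p q : ℝ) (f : Ω → ℝ) : ℝ≥0∞ :=
  (∫⁻ t in Ioi (0 : ℝ),
      ENNReal.ofReal (q / p * t ^ (q / p - 1)) * decRearr μ f t ^ q) ^ (1 / q)

/-! Monotonicity and homogeneity of `Λ_{p,q}` hold term by term in the partition sums. For the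
lower `q`-estimate, intersect the pieces of a partition for each `fᵢ` with the support of `fᵢ`:
on such a piece `Σⱼ fⱼ = fᵢ`, a piece not inside the support contributes `0` anyway, and since the
supports are disjoint all these pieces together (with the complement of their union) form one
partition for `Σᵢ fᵢ`. Testing against `{A, Aᶜ}` gives `μ(A)^{1/p} ≤ ‖χ_A‖`. For minimality, given
a partition `{Aᵢ}` let `cᵢ = inf_{Aᵢ} |f|`: the functions `cᵢ χ_{Aᵢ}` are disjointly supported,
their sum lies below `|f|`, and `N(cᵢ χ_{Aᵢ}) ≥ cᵢ μ(Aᵢ)^{1/p}`, so the lower `q`-estimate and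
monotonicity of `N` bound the partition sum by `N(f)`. -/

open Function

theorem ENNReal.finsetSum_iSup_eq_iSup_pi {ι κ : Type*} [Nonempty κ] (s : Finset ι)
    (u : ι → κ → ℝ≥0∞) : ∑ i ∈ s, ⨆ j, u i j = ⨆ g : ι → κ, ∑ i ∈ s, u i (g i) := by
  classical
  calc ∑ i ∈ s, ⨆ j, u i j = ∑ i ∈ s, ⨆ g : ι → κ, u i (g i) :=
        Finset.sum_congr rfl fun i _ =>
          ((surjective_eval (β := fun _ => κ) i).iSup_comp (u i)).symm
    _ = ⨆ g : ι → κ, ∑ i ∈ s, u i (g i) := by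
        refine ENNReal.finsetSum_iSup fun g g' =>
          ⟨fun i => if u i (g i) ≤ u i (g' i) then g' i else g i, fun i => ?_⟩
        beta_reduce
        split_ifs with h
        · exact ⟨h, le_rfl⟩
        · exact ⟨le_rfl, (not_le.mp h).le⟩

section DisjointSupports

variable {Ω : Type*} {n : ℕ}

theorem disjSupp_iff {f : Fin n → Ω → ℝ} :
    DisjSupp f ↔ Pairwise (Disjoint on fun i => support (f i)) := by
  simp only [DisjSupp, Pairwise, Function.onFun, Set.disjoint_left, mem_support,
    not_not, or_iff_not_imp_left]

theorem DisjSupp.eqOn_sum {f : Fin n → Ω → ℝ} (hd : DisjSupp f) (i : Fin n) :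
    EqOn (fun x => ∑ j, f j x) (f i) (support (f i)) := fun x hx =>
  Finset.sum_eq_single_of_mem i (Finset.mem_univ i) fun j _ hji => (hd j i hji x).resolve_right hx

theorem sum_mul_indicator_of_mem {ι : Type*} [Fintype ι] {A : ι → Set Ω}
    (hA : Pairwise (Disjoint on A)) (r : ι → ℝ) {i : ι} {x : Ω} (hx : x ∈ A i) :
    ∑ j, r j * (A j).indicator 1 x = r i := by
  rw [Finset.sum_eq_single_of_mem i (Finset.mem_univ i) fun j _ hji => ?_]
  · simp [indicator_of_mem hx]
  · simp [indicator_of_notMem ((hA hji).notMem_of_mem_right hx)]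

theorem disjSupp_mul_indicator {A : Fin n → Set Ω} (hA : Pairwise (Disjoint on A))
    (r : Fin n → ℝ) : DisjSupp fun i x => r i * (A i).indicator 1 x :=
  disjSupp_iff.mpr <| hA.mono fun _ _ h => h.mono
    ((support_mul_subset_right _ _).trans support_indicator_subset)
    ((support_mul_subset_right _ _).trans support_indicator_subset)

end DisjointSupports

section PartitionSums

variable {Ω : Type*} [MeasurableSpace Ω]

abbrev BorelPartition (Ω : Type*) [MeasurableSpace Ω] : Type _ :=
  Σ n : ℕ, {A : Fin n → Set Ω // IsBorelPartition A}

instance : Nonempty (BorelPartition Ω) :=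
  ⟨⟨1, fun _ => univ, fun _ => .univ, Subsingleton.pairwise, iUnion_const univ⟩⟩

noncomputable def pieceTerm (μ : Measure Ω) (p q : ℝ) (f : Ω → ℝ) (A : Set Ω) : ℝ≥0∞ :=
  (⨅ x ∈ A, ENNReal.ofReal |f x|) ^ q * μ A ^ (q / p)

noncomputable def partitionSum (μ : Measure Ω) (p q : ℝ) (f : Ω → ℝ) (P : BorelPartition Ω) :
    ℝ≥0∞ :=
  ∑ i, pieceTerm μ p q f (P.2.1 i)

variable {μ : Measure Ω} {p q : ℝ}

theorem pieceTerm_empty (hqp : 0 < q / p) (f : Ω → ℝ) : pieceTerm μ p q f ∅ = 0 := by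
  simp [pieceTerm, zero_rpow_of_pos hqp]

theorem pieceTerm_mono (hq : 0 ≤ q) {f g : Ω → ℝ} (h : ∀ x, |f x| ≤ |g x|) (A : Set Ω) :
    pieceTerm μ p q f A ≤ pieceTerm μ p q g A := by
  unfold pieceTerm
  exact mul_le_mul_left (rpow_le_rpow (iInf₂_mono fun x _ => ofReal_le_ofReal (h x)) hq) _

theorem pieceTerm_congr {f g : Ω → ℝ} {A : Set Ω} (h : EqOn f g A) :
    pieceTerm μ p q f A = pieceTerm μ p q g A := by
  unfold pieceTerm
  rw [iInf_congr fun x => iInf_congr fun hx => by rw [h hx]]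

theorem pieceTerm_const_mul (hq : 0 ≤ q) (hqp : 0 < q / p) (α : ℝ) (f : Ω → ℝ) (A : Set Ω) :
    pieceTerm μ p q (fun x => α * f x) A = ENNReal.ofReal |α| ^ q * pieceTerm μ p q f A := by
  rcases A.eq_empty_or_nonempty with rfl | hA
  · simp [pieceTerm_empty hqp]
  have : Nonempty A := hA.to_subtype
  simp only [pieceTerm, abs_mul, ENNReal.ofReal_mul (abs_nonneg α), ← mul_assoc,
    ← ENNReal.mul_rpow_of_nonneg _ _ hq, iInf_subtype']
  rw [ENNReal.mul_iInf (by simp)]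

theorem pieceTerm_le_inter_support (hq : 0 < q) (f : Ω → ℝ) (A : Set Ω) :
    pieceTerm μ p q f A ≤ pieceTerm μ p q f (A ∩ support f) := by
  by_cases hA : A ⊆ support f
  · rw [inter_eq_left.mpr hA]
  obtain ⟨x, hxA, hx⟩ := not_subset.mp hA
  have hinf : (⨅ y ∈ A, ENNReal.ofReal |f y|) = 0 :=
    le_antisymm ((iInf₂_le x hxA).trans (by simp [notMem_support.mp hx])) bot_le
  simp [pieceTerm, hinf, zero_rpow_of_pos hq]

theorem pieceTerm_eq_rpow (hq : 0 ≤ q) (f : Ω → ℝ) (A : Set Ω) :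
    pieceTerm μ p q f A = ((⨅ x ∈ A, ENNReal.ofReal |f x|) * μ A ^ (1 / p)) ^ q := by
  rw [pieceTerm, ENNReal.mul_rpow_of_nonneg _ _ hq, ← ENNReal.rpow_mul, one_div_mul_eq_div]

/-- For `A = ∅` the infimum is `∞`, whose `toReal` is `0`; this is harmless as `μ ∅ = 0`. -/
theorem pieceTerm_eq_ofReal_toReal (hp : 0 < p) (hq : 0 ≤ q) (f : Ω → ℝ) (A : Set Ω) :
    pieceTerm μ p q f A =
      (ENNReal.ofReal (⨅ x ∈ A, ENNReal.ofReal |f x|).toReal * μ A ^ (1 / p)) ^ q := by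
  rw [pieceTerm_eq_rpow hq]
  rcases A.eq_empty_or_nonempty with rfl | ⟨x, hx⟩
  · simp [zero_rpow_of_pos (inv_pos.mpr hp)]
  rw [ENNReal.ofReal_toReal (ne_top_of_le_ne_top ofReal_ne_top (iInf₂_le x hx))]

theorem lambdaSup_eq_iSup_pieceTerm (f : Ω → ℝ) :
    LambdaSup μ p q f =
      ⨆ (n : ℕ) (A : Fin n → Set Ω) (_ : IsBorelPartition A),
        (∑ i, pieceTerm μ p q f (A i)) ^ (1 / q) :=
  rfl

theorem lambdaSup_eq_iSup_partitionSum (f : Ω → ℝ) :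
    LambdaSup μ p q f = ⨆ P : BorelPartition Ω, partitionSum μ p q f P ^ (1 / q) := by
  simp only [LambdaSup, partitionSum, pieceTerm, iSup_sigma, iSup_subtype']

theorem lambdaSup_rpow (hq : 0 < q) (f : Ω → ℝ) :
    LambdaSup μ p q f ^ q = ⨆ P : BorelPartition Ω, partitionSum μ p q f P := by
  rw [lambdaSup_eq_iSup_partitionSum]
  refine ((ENNReal.orderIsoRpow q hq).map_iSup _).trans (iSup_congr fun P => ?_)
  rw [ENNReal.orderIsoRpow_apply, ← ENNReal.rpow_mul, one_div_mul_cancel hq.ne', ENNReal.rpow_one]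

/-- Completing a disjoint family by the complement of its union gives a partition. -/
theorem sum_pieceTerm_rpow_le_lambdaSup (hq : 0 ≤ q) {ι : Type*} [Fintype ι] {A : ι → Set Ω}
    (hmeas : ∀ i, MeasurableSet (A i)) (hdisj : Pairwise (Disjoint on A)) (f : Ω → ℝ) :
    (∑ i, pieceTerm μ p q f (A i)) ^ (1 / q) ≤ LambdaSup μ p q f := by
  set B : Option ι → Set Ω := fun o => o.elim (⋃ i, A i)ᶜ A
  set e := (Fintype.equivFin (Option ι)).symm
  have hBmeas : ∀ o, MeasurableSet (B o) := by
    rintro (_ | i)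
    exacts [(MeasurableSet.iUnion hmeas).compl, hmeas i]
  have hBdisj : Pairwise (Disjoint on B) := by
    rintro (_ | i) (_ | j) hij
    · exact absurd rfl hij
    · exact disjoint_compl_left.mono_right (subset_iUnion A j)
    · exact disjoint_compl_right.mono_left (subset_iUnion A i)
    · exact hdisj (Option.some_injective _ |>.ne_iff.mp hij)
  have hBcover : ⋃ k, B (e k) = univ := by
    rw [e.surjective.iUnion_comp B, iUnion_option]
    exact compl_union_self _
  have hB : IsBorelPartition (B ∘ e) :=
    ⟨fun k => hBmeas (e k), hBdisj.comp_of_injective e.injective, hBcover⟩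
  calc (∑ i, pieceTerm μ p q f (A i)) ^ (1 / q)
      ≤ (∑ k, pieceTerm μ p q f (B (e k))) ^ (1 / q) := by
        gcongr
        rw [e.sum_comp (fun o => pieceTerm μ p q f (B o)), Fintype.sum_option]
        exact le_add_self
    _ ≤ LambdaSup μ p q f := le_iSup₂_of_le _ (B ∘ e) (le_iSup_of_le hB le_rfl)

theorem lambdaSup_mono (hq : 0 ≤ q) {f g : Ω → ℝ} (h : ∀ x, |f x| ≤ |g x|) :
    LambdaSup μ p q f ≤ LambdaSup μ p q g := by
  simp only [lambdaSup_eq_iSup_pieceTerm]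
  gcongr with n A _ i
  exact pieceTerm_mono hq h _

theorem lambdaSup_const_mul (hq : 0 < q) (hqp : 0 < q / p) (α : ℝ) (f : Ω → ℝ) :
    LambdaSup μ p q (fun x => α * f x) = ENNReal.ofReal |α| * LambdaSup μ p q f := by
  simp only [lambdaSup_eq_iSup_pieceTerm, ENNReal.mul_iSup, pieceTerm_const_mul hq.le hqp,
    ← Finset.mul_sum, ENNReal.mul_rpow_of_nonneg _ _ (one_div_pos.mpr hq).le, ← ENNReal.rpow_mul,
    mul_one_div_cancel hq.ne', ENNReal.rpow_one]

theorem sum_partitionSum_le_lambdaSup_rpow (hq : 0 < q) {n : ℕ} {f : Fin n → Ω → ℝ}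
    (hf : ∀ i, Measurable (f i)) (hd : DisjSupp f) (P : Fin n → BorelPartition Ω) :
    ∑ i, partitionSum μ p q (f i) (P i) ≤ LambdaSup μ p q (fun x => ∑ i, f i x) ^ q := by
  set C : (Σ i, Fin (P i).1) → Set Ω := fun k => (P k.1).2.1 k.2 ∩ support (f k.1)
  have hCmeas : ∀ k, MeasurableSet (C k) := fun k =>
    ((P k.1).2.2.1 k.2).inter (measurableSet_support (hf k.1))
  have hCdisj : Pairwise (Disjoint on C) := by
    rintro ⟨i, j⟩ ⟨i', j'⟩ hne
    rcases eq_or_ne i i' with rfl | hii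
    · exact ((P i).2.2.2.1 fun hjj => hne (by subst hjj; rfl)).mono
        inter_subset_left inter_subset_left
    · exact (disjSupp_iff.mp hd hii).mono inter_subset_right inter_subset_right
  rw [← ENNReal.rpow_inv_le_iff hq, ← one_div]
  calc (∑ i, partitionSum μ p q (f i) (P i)) ^ (1 / q)
      ≤ (∑ k, pieceTerm μ p q (fun x => ∑ i, f i x) (C k)) ^ (1 / q) := by
        gcongr
        rw [Fintype.sum_sigma]
        refine Finset.sum_le_sum fun i _ => Finset.sum_le_sum fun j _ => ?_
        calc pieceTerm μ p q (f i) ((P i).2.1 j)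
            ≤ pieceTerm μ p q (f i) ((P i).2.1 j ∩ support (f i)) :=
              pieceTerm_le_inter_support hq _ _
          _ = _ := pieceTerm_congr ((hd.eqOn_sum i).symm.mono inter_subset_right)
    _ ≤ LambdaSup μ p q (fun x => ∑ i, f i x) :=
        sum_pieceTerm_rpow_le_lambdaSup hq.le hCmeas hCdisj _

theorem lambdaSup_sum_lowerEstimate (hq : 0 < q) {n : ℕ} {f : Fin n → Ω → ℝ}
    (hf : ∀ i, Measurable (f i)) (hd : DisjSupp f) :
    (∑ i, LambdaSup μ p q (f i) ^ q) ^ (1 / q) ≤ LambdaSup μ p q (fun x => ∑ i, f i x) := by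
  rw [one_div, ENNReal.rpow_inv_le_iff hq]
  calc ∑ i, LambdaSup μ p q (f i) ^ q
      = ⨆ P : Fin n → BorelPartition Ω, ∑ i, partitionSum μ p q (f i) (P i) := by
        simp only [lambdaSup_rpow hq]
        exact ENNReal.finsetSum_iSup_eq_iSup_pi _ _
    _ ≤ LambdaSup μ p q (fun x => ∑ i, f i x) ^ q :=
        iSup_le (sum_partitionSum_le_lambdaSup_rpow hq hf hd)

theorem rpow_le_lambdaSup_indicator (hp : 0 < p) (hq : 0 < q) {A : Set Ω}
    (hA : MeasurableSet A) : μ A ^ (1 / p) ≤ LambdaSup μ p q (A.indicator 1) := by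
  rcases A.eq_empty_or_nonempty with rfl | ⟨x₀, hx₀⟩
  · simp [zero_rpow_of_pos (inv_pos.mpr hp)]
  have hinf : (⨅ x ∈ A, ENNReal.ofReal |A.indicator (1 : Ω → ℝ) x|) = 1 :=
    le_antisymm ((iInf₂_le x₀ hx₀).trans (by simp [indicator_of_mem hx₀]))
      (le_iInf₂ fun x hx => by simp [indicator_of_mem hx])
  calc μ A ^ (1 / p) = pieceTerm μ p q (A.indicator 1) A ^ (1 / q) := by
        rw [pieceTerm_eq_rpow hq.le, hinf, one_mul, one_div q, ENNReal.rpow_rpow_inv hq.ne']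
    _ ≤ LambdaSup μ p q (A.indicator 1) := by
        simpa using sum_pieceTerm_rpow_le_lambdaSup (ι := Unit) (μ := μ) (p := p) hq.le
          (fun _ => hA) Subsingleton.pairwise (A.indicator 1)

theorem lambdaSup_le_of_lowerEstimate (hp : 0 < p) (hq : 0 < q) (N : (Ω → ℝ) → ℝ≥0∞)
    (hmono : ∀ f g : Ω → ℝ, Measurable f → Measurable g → (∀ x, |f x| ≤ |g x|) → N f ≤ N g)
    (hhom : ∀ (α : ℝ) (f : Ω → ℝ), Measurable f →
      N (fun x => α * f x) = ENNReal.ofReal |α| * N f)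
    (hlow : ∀ (n : ℕ) (f : Fin n → Ω → ℝ), (∀ i, Measurable (f i)) → DisjSupp f →
      (∑ i, N (f i) ^ q) ^ (1 / q) ≤ N (fun x => ∑ i, f i x))
    (hind : ∀ A : Set Ω, MeasurableSet A → μ A ^ (1 / p) ≤ N (A.indicator 1))
    {f : Ω → ℝ} (hf : Measurable f) : LambdaSup μ p q f ≤ N f := by
  refine iSup_le fun n => iSup_le fun A => iSup_le fun hA => ?_
  set r : Fin n → ℝ := fun i => (⨅ x ∈ A i, ENNReal.ofReal |f x|).toReal
  set φ : Fin n → Ω → ℝ := fun i x => r i * (A i).indicator 1 x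
  have hφ : ∀ i, Measurable (φ i) := fun i =>
    measurable_const.mul (measurable_one.indicator (hA.1 i))
  have hφf : ∀ x, |∑ i, φ i x| ≤ |f x| := by
    intro x
    obtain ⟨i, hx⟩ := mem_iUnion.mp (hA.2.2 ▸ mem_univ x)
    rw [sum_mul_indicator_of_mem hA.2.1 r hx, abs_of_nonneg toReal_nonneg]
    exact toReal_le_of_le_ofReal (abs_nonneg _) (iInf₂_le x hx)
  calc (∑ i, pieceTerm μ p q f (A i)) ^ (1 / q) ≤ (∑ i, N (φ i) ^ q) ^ (1 / q) := by
        gcongr with i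
        rw [pieceTerm_eq_ofReal_toReal hp hq.le, hhom _ _ (measurable_one.indicator (hA.1 i)),
          abs_of_nonneg toReal_nonneg]
        gcongr
        exact hind _ (hA.1 i)
    _ ≤ N (fun x => ∑ i, φ i x) := hlow n φ hφ (disjSupp_mul_indicator hA.2.1 r)
    _ ≤ N f := hmono _ _ (Finset.measurable_sum _ fun i _ => hφ i) hf hφf

end PartitionSums

theorem lambdaSup_smallest_general
    {Ω : Type*} [MeasurableSpace Ω]
    (p q : ℝ) (hp : 0 < p) (hpq : p < q)
    (μ : Measure Ω) :
    (∀ f g : Ω → ℝ, Measurable f → Measurable g → (∀ x, |f x| ≤ |g x|) →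
      LambdaSup μ p q f ≤ LambdaSup μ p q g) ∧
    (∀ (α : ℝ) (f : Ω → ℝ), Measurable f →
      LambdaSup μ p q (fun x => α * f x) = ENNReal.ofReal |α| * LambdaSup μ p q f) ∧
    (∀ (n : ℕ) (f : Fin n → Ω → ℝ), (∀ i, Measurable (f i)) → DisjSupp f →
      (∑ i, LambdaSup μ p q (f i) ^ q) ^ (1 / q) ≤
        LambdaSup μ p q (fun x => ∑ i, f i x)) ∧
    (∀ A : Set Ω, MeasurableSet A →
      μ A ^ (1 / p) ≤ LambdaSup μ p q (A.indicator 1)) ∧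
    (∀ N : (Ω → ℝ) → ℝ≥0∞,
      (∀ f g : Ω → ℝ, Measurable f → Measurable g → (∀ x, |f x| ≤ |g x|) → N f ≤ N g) →
      (∀ (α : ℝ) (f : Ω → ℝ), Measurable f →
        N (fun x => α * f x) = ENNReal.ofReal |α| * N f) →
      (∀ (n : ℕ) (f : Fin n → Ω → ℝ), (∀ i, Measurable (f i)) → DisjSupp f →
        (∑ i, N (f i) ^ q) ^ (1 / q) ≤ N (fun x => ∑ i, f i x)) →
      (∀ A : Set Ω, MeasurableSet A → μ A ^ (1 / p) ≤ N (A.indicator 1)) →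
      ∀ f : Ω → ℝ, Measurable f → LambdaSup μ p q f ≤ N f) := by
  have hq : 0 < q := hp.trans hpq
  exact ⟨fun f g _ _ h => lambdaSup_mono hq.le h,
    fun α f _ => lambdaSup_const_mul hq (div_pos hq hp) α f,
    fun n f hf hd => lambdaSup_sum_lowerEstimate hq hf hd,
    fun A hA => rpow_le_lambdaSup_indicator hp hq hA,
    fun N hmono hhom hlow hind _ hf =>
      lambdaSup_le_of_lowerEstimate hp hq N hmono hhom hlow hind hf⟩

/-- For `0 < p < q < ∞`, the `Λ_{p,q}(μ)`-quasinorm is the smallest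
monotone homogeneous functional on the Borel functions satisfying a lower `q`-estimate
and `‖χ_A‖ ≥ μ(A)^{1/p}` for Borel `A`. -/
theorem lambdaSup_smallest
    {Ω : Type*} [TopologicalSpace Ω] [CompactSpace Ω] [T2Space Ω]
    [MeasurableSpace Ω] [BorelSpace Ω]
    (p q : ℝ) (hp : 0 < p) (hpq : p < q)
    (μ : Measure Ω) [IsFiniteMeasure μ] :
    (∀ f g : Ω → ℝ, Measurable f → Measurable g → (∀ x, |f x| ≤ |g x|) →
      LambdaSup μ p q f ≤ LambdaSup μ p q g) ∧
    (∀ (α : ℝ) (f : Ω → ℝ), Measurable f →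
      LambdaSup μ p q (fun x => α * f x) = ENNReal.ofReal |α| * LambdaSup μ p q f) ∧
    (∀ (n : ℕ) (f : Fin n → Ω → ℝ), (∀ i, Measurable (f i)) → DisjSupp f →
      (∑ i, LambdaSup μ p q (f i) ^ q) ^ (1 / q) ≤
        LambdaSup μ p q (fun x => ∑ i, f i x)) ∧
    (∀ A : Set Ω, MeasurableSet A →
      μ A ^ (1 / p) ≤ LambdaSup μ p q (A.indicator 1)) ∧
    (∀ N : (Ω → ℝ) → ℝ≥0∞,
      (∀ f g : Ω → ℝ, Measurable f → Measurable g → (∀ x, |f x| ≤ |g x|) → N f ≤ N g) →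
      (∀ (α : ℝ) (f : Ω → ℝ), Measurable f →
        N (fun x => α * f x) = ENNReal.ofReal |α| * N f) →
      (∀ (n : ℕ) (f : Fin n → Ω → ℝ), (∀ i, Measurable (f i)) → DisjSupp f →
        (∑ i, N (f i) ^ q) ^ (1 / q) ≤ N (fun x => ∑ i, f i x)) →
      (∀ A : Set Ω, MeasurableSet A → μ A ^ (1 / p) ≤ N (A.indicator 1)) →
      ∀ f : Ω → ℝ, Measurable f → LambdaSup μ p q f ≤ N f) :=
  lambdaSup_smallest_general p q hp hpq μ
end

section
/- Suppose 0 < p < q < ∞ and μ is a finite Borel measure on a compact Hausdorff space Ω. For every Borel function f, ‖f‖_{Λ_{p,q}(μ)} = sup_𝒯 (Σ_{j=1}^n f*(τ_j)^q (τ_j − τ_{j−1})^{q/p})^{1/q}, where the supremum runs over all finite sets 𝒯 = {τ_0 = 0 < τ_1 < ⋯ < τ_n} of reals and f* denotes the decreasing rearrangement of |f|. -/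
open Set Filter Topology MeasureTheory ENNReal

lemma convex_step (r : ℝ) (hr : 1 ≤ r) (a b u w x v : ℝ) (ha : 0 ≤ a) (hb : 0 ≤ b)
    (hux : u ≤ x) (hxv : x ≤ v) (hvw : v ≤ w) :
    a * (x - u) ^ r + b * (w - x) ^ r ≤
      max (b * (w - u) ^ r) (a * (v - u) ^ r + b * (w - v) ^ r) := by
  have hr0 : (0:ℝ) < r := lt_of_lt_of_le one_pos hr
  have h1 : ConvexOn ℝ (Icc u w) (fun y => (y - u) ^ r) := by
    refine ⟨convex_Icc u w, ?_⟩
    intro y hy z hz α β hα hβ hαβ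
    have hkey : α • y + β • z - u = α • (y - u) + β • (z - u) := by
      simp only [smul_eq_mul]; linear_combination u * hαβ
    dsimp only; rw [hkey]
    exact (convexOn_rpow hr).2 (sub_nonneg.2 hy.1) (sub_nonneg.2 hz.1) hα hβ hαβ
  have h2 : ConvexOn ℝ (Icc u w) (fun y => (w - y) ^ r) := by
    refine ⟨convex_Icc u w, ?_⟩
    intro y hy z hz α β hα hβ hαβ
    have hkey : w - (α • y + β • z) = α • (w - y) + β • (w - z) := by
      simp only [smul_eq_mul]; linear_combination (-w) * hαβ
    dsimp only; rw [hkey]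
    exact (convexOn_rpow hr).2 (sub_nonneg.2 hy.2) (sub_nonneg.2 hz.2) hα hβ hαβ
  have hc : ConvexOn ℝ (Icc u w) (fun y => a * (y - u) ^ r + b * (w - y) ^ r) := by
    have := (h1.smul ha).add (h2.smul hb)
    exact this
  have hmem_u : u ∈ Icc u w := ⟨le_refl u, le_trans hux (le_trans hxv hvw)⟩
  have hmem_v : v ∈ Icc u w := ⟨le_trans hux hxv, hvw⟩
  have hx : x ∈ Icc u v := ⟨hux, hxv⟩
  have := hc.le_max_of_mem_Icc hmem_u hmem_v hx
  simpa [sub_self, Real.zero_rpow (ne_of_gt hr0)] using this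

lemma key_lemma (r : ℝ) (hr : 1 ≤ r) :
    ∀ (n : ℕ) (a t m : ℕ → ℝ),
      (∀ j, j < n → 0 ≤ a j) →
      (∀ i j, i ≤ j → j < n → a j ≤ a i) →
      (∀ i j, i ≤ j → j ≤ n → t i ≤ t j) →
      (∀ i j, i ≤ j → j ≤ n → m i ≤ m j) →
      t 0 = m 0 →
      (∀ j, j ≤ n → t j ≤ m j) →
      ∃ (k : ℕ) (e : ℕ → ℕ), k ≤ n ∧ (∀ i, i < k → e i < n) ∧
        (∀ i j, i < j → j < k → e i < e j) ∧
        ∑ j ∈ Finset.range n, a j * (t (j+1) - t j) ^ r ≤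
          ∑ i ∈ Finset.range k,
            a (e i) * (m (e i + 1) - (if i = 0 then m 0 else m (e (i-1) + 1))) ^ r := by
  have hr0 : (0:ℝ) < r := lt_of_lt_of_le one_pos hr
  intro n
  induction n with
  | zero =>
    intro a t m _ _ _ _ _ _
    exact ⟨0, id, le_refl 0, by omega, by omega, by simp⟩
  | succ n IH =>
    intro a t m ha0 haA ht hm h0 htm
    rcases Nat.eq_zero_or_pos n with hn | hn
    · subst hn
      refine ⟨1, fun _ => 0, le_refl 1, by intro i _; simp, by omega, ?_⟩
      simp only [Finset.sum_range_one]
      norm_num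
      have h1 : t 1 - t 0 ≤ m 1 - m 0 := by
        have := htm 1 (by omega); rw [h0]; linarith
      have h2 : (0:ℝ) ≤ t 1 - t 0 := sub_nonneg.2 (ht 0 1 (by omega) (by omega))
      exact mul_le_mul_of_nonneg_left (Real.rpow_le_rpow h2 h1 (le_of_lt hr0)) (ha0 0 (by omega))
    · -- n ≥ 1; write n = d + 1
      obtain ⟨d, rfl⟩ : ∃ d, n = d + 1 := ⟨n - 1, by omega⟩
      have hsplit : ∑ j ∈ Finset.range (d+2), a j * (t (j+1) - t j) ^ r
          = (∑ j ∈ Finset.range d, a j * (t (j+1) - t j) ^ r)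
            + a d * (t (d+1) - t d) ^ r + a (d+1) * (t (d+2) - t (d+1)) ^ r := by
        rw [Finset.sum_range_succ, Finset.sum_range_succ]
      have hstep1 : a (d+1) * (t (d+2) - t (d+1)) ^ r
          ≤ a (d+1) * (m (d+2) - t (d+1)) ^ r := by
        refine mul_le_mul_of_nonneg_left (Real.rpow_le_rpow ?_ ?_ (le_of_lt hr0))
          (ha0 (d+1) (by omega))
        · exact sub_nonneg.2 (ht (d+1) (d+2) (by omega) (by omega))
        · have := htm (d+2) (le_refl _); linarith
      have hconv := convex_step r hr (a d) (a (d+1)) (t d) (m (d+2)) (t (d+1)) (m (d+1))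
        (ha0 d (by omega)) (ha0 (d+1) (by omega))
        (ht d (d+1) (by omega) (by omega)) (htm (d+1) (by omega))
        (hm (d+1) (d+2) (by omega) (by omega))
      rcases le_max_iff.1 hconv with hB | hA
      · -- Case B : merge last two intervals
        set a' : ℕ → ℝ := fun j => if j < d then a j else a (d+1) with ha'
        set t' : ℕ → ℝ := fun j => if j ≤ d then t j else m (d+2) with ht'
        set m' : ℕ → ℝ := fun j => if j ≤ d then m j else m (d+2) with hm'
        obtain ⟨k, e, hk, he, hes, hsum⟩ := IH a' t' m'
          (by intro j hj; by_cases h : j < d <;> simp only [ha', h, if_true, if_false] <;>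
              [exact ha0 j (by omega); exact ha0 (d+1) (by omega)])
          (by intro i j hij hj; simp only [ha']
              by_cases h1 : i < d <;> by_cases h2 : j < d <;>
                simp only [h1, h2, if_true, if_false]
              · exact haA i j hij (by omega)
              · exact haA i (d+1) (by omega) (by omega)
              · omega
              · exact le_refl _)
          (by intro i j hij hj; simp only [ht']
              by_cases h1 : i ≤ d <;> by_cases h2 : j ≤ d <;>
                simp only [h1, h2, if_true, if_false]
              · exact ht i j hij (by omega)
              · exact le_trans (htm i (by omega)) (hm i (d+2) (by omega) (by omega))
              · omega
              · exact le_refl _)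
          (by intro i j hij hj; simp only [hm']
              by_cases h1 : i ≤ d <;> by_cases h2 : j ≤ d <;>
                simp only [h1, h2, if_true, if_false]
              · exact hm i j hij (by omega)
              · exact hm i (d+2) (by omega) (by omega)
              · omega
              · exact le_refl _)
          (by simp only [ht', hm', if_pos (Nat.zero_le d)]; exact h0)
          (by intro j hj; simp only [ht', hm']
              by_cases h1 : j ≤ d <;> simp only [h1, if_true, if_false]
              · exact htm j (by omega)
              · exact le_refl _)
        refine ⟨k, fun i => if e i < d then e i else d + 1, by omega, ?_, ?_, ?_⟩
        · intro i hi; by_cases h : e i < d <;> simp only [h, if_true, if_false] <;> omega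
        · intro i j hij hj
          have h1 := hes i j hij hj
          have h2 := he j hj
          by_cases hi' : e i < d <;> by_cases hj' : e j < d <;>
            simp only [hi', hj', if_true, if_false] <;> omega
        · have hL : ∑ j ∈ Finset.range (d+1), a' j * (t' (j+1) - t' j) ^ r
              = (∑ j ∈ Finset.range d, a j * (t (j+1) - t j) ^ r)
                + a (d+1) * (m (d+2) - t d) ^ r := by
            rw [Finset.sum_range_succ]
            congr 1
            · apply Finset.sum_congr rfl
              intro j hj
              have hj' := Finset.mem_range.1 hj
              simp only [ha', ht', if_pos hj', if_pos (by omega : j + 1 ≤ d),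
                if_pos (by omega : j ≤ d)]
            · simp only [ha', ht', if_neg (lt_irrefl d), if_neg (by omega : ¬ d + 1 ≤ d),
                if_pos (le_refl d)]
          have hcomp : ∀ l, l < k → a' (e l) = a (if e l < d then e l else d + 1) ∧
              m' (e l + 1) = m ((if e l < d then e l else d + 1) + 1) := by
            intro l hl
            have hel := he l hl
            by_cases h : e l < d
            · constructor <;> simp only [ha', hm', if_pos h, if_pos (by omega : e l + 1 ≤ d)]
            · have hed : e l = d := by omega
              rw [hed]
              constructor <;>
                simp only [ha', hm', if_neg (lt_irrefl d), if_neg (by omega : ¬ d + 1 ≤ d)]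
          have hval : ∀ i ∈ Finset.range k,
              a' (e i) * (m' (e i + 1) - (if i = 0 then m' 0 else m' (e (i-1) + 1))) ^ r
              = a (if e i < d then e i else d + 1) *
                (m ((if e i < d then e i else d + 1) + 1) -
                  (if i = 0 then m 0 else m ((if e (i-1) < d then e (i-1) else d + 1) + 1))) ^ r := by
            intro i hi
            have hik := Finset.mem_range.1 hi
            obtain ⟨hA1, hA2⟩ := hcomp i hik
            rw [hA1, hA2]
            by_cases hi0 : i = 0
            · simp only [hi0, if_pos rfl, if_true, hm', if_pos (Nat.zero_le d)]
            · rw [if_neg hi0, if_neg hi0, (hcomp (i-1) (by omega)).2]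
          calc ∑ j ∈ Finset.range (d+2), a j * (t (j+1) - t j) ^ r
              ≤ (∑ j ∈ Finset.range d, a j * (t (j+1) - t j) ^ r)
                + a (d+1) * (m (d+2) - t d) ^ r := by
                rw [hsplit]; linarith
            _ = ∑ j ∈ Finset.range (d+1), a' j * (t' (j+1) - t' j) ^ r := hL.symm
            _ ≤ ∑ i ∈ Finset.range k,
                a' (e i) * (m' (e i + 1) - (if i = 0 then m' 0 else m' (e (i-1) + 1))) ^ r := hsum
            _ = _ := Finset.sum_congr rfl hval
      · -- Case A : close off the last interval as its own block
        set t'' : ℕ → ℝ := fun j => if j ≤ d then t j else m (d+1) with ht''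
        obtain ⟨k, e, hk, he, hes, hsum⟩ := IH a t'' m
          (fun j hj => ha0 j (by omega))
          (fun i j hij hj => haA i j hij (by omega))
          (by intro i j hij hj; simp only [ht'']
              by_cases h1 : i ≤ d <;> by_cases h2 : j ≤ d <;>
                simp only [h1, h2, if_true, if_false]
              · exact ht i j hij (by omega)
              · exact le_trans (htm i (by omega)) (hm i (d+1) (by omega) (by omega))
              · omega
              · exact le_refl _)
          (fun i j hij hj => hm i j hij (by omega))
          (by simp only [ht'', if_pos (Nat.zero_le d)]; exact h0)
          (by intro j hj; simp only [ht'']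
              by_cases h1 : j ≤ d <;> simp only [h1, if_true, if_false]
              · exact htm j (by omega)
              · exact hm (d+1) j (by omega) (by omega))
        refine ⟨k+1, fun i => if i < k then e i else d + 1, by omega, ?_, ?_, ?_⟩
        · intro i hi; by_cases h : i < k
          · simp only [h, if_true]; exact lt_trans (he i h) (by omega)
          · simp only [h, if_false]; omega
        · intro i j hij hj
          have hik : i < k := by omega
          by_cases hjk : j < k
          · simp only [if_pos hik, if_pos hjk]; exact hes i j hij hjk
          · simp only [if_pos hik, if_neg hjk]
            have := he i hik; omega
        · have hL : ∑ j ∈ Finset.range (d+1), a j * (t'' (j+1) - t'' j) ^ r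
              = (∑ j ∈ Finset.range d, a j * (t (j+1) - t j) ^ r)
                + a d * (m (d+1) - t d) ^ r := by
            rw [Finset.sum_range_succ]
            congr 1
            · apply Finset.sum_congr rfl
              intro j hj
              have hj' := Finset.mem_range.1 hj
              simp only [ht'', if_pos (by omega : j + 1 ≤ d), if_pos (by omega : j ≤ d)]
            · simp only [ht'', if_neg (by omega : ¬ d + 1 ≤ d), if_pos (le_refl d)]
          have hlast : a (d+1) * (m (d+2) - m (d+1)) ^ r
              ≤ a (d+1) * (m (d+2) - (if k = 0 then m 0 else m (e (k-1) + 1))) ^ r := by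
            refine mul_le_mul_of_nonneg_left (Real.rpow_le_rpow ?_ ?_ (le_of_lt hr0))
              (ha0 (d+1) (by omega))
            · exact sub_nonneg.2 (hm (d+1) (d+2) (by omega) (by omega))
            · have hbase : (if k = 0 then m 0 else m (e (k-1) + 1)) ≤ m (d+1) := by
                by_cases hk0 : k = 0
                · simp only [hk0, if_pos rfl]; exact hm 0 (d+1) (by omega) (by omega)
                · simp only [hk0, if_false]
                  have := he (k-1) (by omega)
                  exact hm (e (k-1) + 1) (d+1) (by omega) (by omega)
              linarith
          calc ∑ j ∈ Finset.range (d+2), a j * (t (j+1) - t j) ^ r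
              ≤ (∑ j ∈ Finset.range d, a j * (t (j+1) - t j) ^ r)
                + a d * (m (d+1) - t d) ^ r + a (d+1) * (m (d+2) - m (d+1)) ^ r := by
                rw [hsplit]; linarith
            _ ≤ (∑ i ∈ Finset.range k,
                  a (e i) * (m (e i + 1) - (if i = 0 then m 0 else m (e (i-1) + 1))) ^ r)
                + a (d+1) * (m (d+2) - m (d+1)) ^ r := by
                rw [← hL]; linarith [hsum]
            _ ≤ _ := by
                rw [Finset.sum_range_succ]
                have hmatch : ∀ i ∈ Finset.range k,
                    a (e i) * (m (e i + 1) - (if i = 0 then m 0 else m (e (i-1) + 1))) ^ r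
                    = a (if i < k then e i else d+1) *
                      (m ((if i < k then e i else d+1) + 1) -
                        (if i = 0 then m 0 else m ((if i - 1 < k then e (i-1) else d+1) + 1))) ^ r := by
                  intro i hi
                  have hik := Finset.mem_range.1 hi
                  simp only [if_pos hik, if_pos (by omega : i - 1 < k)]
                have hlast2 : a (if k < k then e k else d+1) *
                    (m ((if k < k then e k else d+1) + 1) -
                      (if k = 0 then m 0 else m ((if k - 1 < k then e (k-1) else d+1) + 1))) ^ r
                    = a (d+1) * (m (d+2) - (if k = 0 then m 0 else m (e (k-1) + 1))) ^ r := by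
                  simp only [if_neg (lt_irrefl k)]
                  by_cases hk0 : k = 0
                  · simp [hk0]
                  · simp only [hk0, if_false, if_pos (by omega : k - 1 < k)]
                rw [Finset.sum_congr rfl hmatch, hlast2]
                exact add_le_add_right hlast _

lemma my_rpow_iSup {ι : Sort*} (g : ι → ℝ≥0∞) (c : ℝ) (hc : 0 < c) :
    (⨆ i, g i) ^ c = ⨆ i, (g i) ^ c := by
  apply le_antisymm
  · have h1 : (⨆ i, g i) ≤ (⨆ i, (g i) ^ c) ^ (1/c) := by
      apply iSup_le
      intro i
      have : g i = ((g i) ^ c) ^ (1/c) := by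
        rw [← ENNReal.rpow_mul, mul_one_div, div_self (ne_of_gt hc), ENNReal.rpow_one]
      rw [this]
      exact ENNReal.rpow_le_rpow (le_iSup (fun i => (g i) ^ c) i) (by positivity)
    calc (⨆ i, g i) ^ c ≤ ((⨆ i, (g i) ^ c) ^ (1/c)) ^ c :=
          ENNReal.rpow_le_rpow h1 (le_of_lt hc)
      _ = ⨆ i, (g i) ^ c := by
          rw [← ENNReal.rpow_mul, one_div, inv_mul_cancel₀ (ne_of_gt hc), ENNReal.rpow_one]
  · exact iSup_le fun i => ENNReal.rpow_le_rpow (le_iSup g i) (le_of_lt hc)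

lemma decRearr_anti {Ω : Type*} [MeasurableSpace Ω] (μ : Measure Ω) (f : Ω → ℝ)
    {t t' : ℝ} (h : t ≤ t') : decRearr μ f t' ≤ decRearr μ f t := by
  apply le_iInf₂
  intro E hE
  apply le_iInf
  intro hμ
  exact iInf₂_le_of_le E hE (iInf_le_of_le (le_trans hμ (ENNReal.ofReal_le_ofReal h)) (le_refl _))

lemma le_decRearr {Ω : Type*} [MeasurableSpace Ω] {μ : Measure Ω} {f : Ω → ℝ}
    (c : ℝ≥0∞) (t : ℝ) (U : Set Ω) (hU : ENNReal.ofReal t < μ U)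
    (hc : ∀ x ∈ U, c ≤ ENNReal.ofReal |f x|) : c ≤ decRearr μ f t := by
  apply le_iInf₂
  intro E hE
  apply le_iInf
  intro hμE
  have hdiff : μ (U \ E) ≠ 0 := by
    intro h0
    have : μ U ≤ μ E := by
      calc μ U ≤ μ (U ∩ E) + μ (U \ E) := measure_le_inter_add_diff μ U E
        _ = μ (U ∩ E) := by rw [h0, add_zero]
        _ ≤ μ E := measure_mono inter_subset_right
    exact absurd (lt_of_lt_of_le hU (le_trans this hμE)) (lt_irrefl _)
  obtain ⟨x, hxU, hxE⟩ := nonempty_of_measure_ne_zero hdiff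
  exact le_trans (hc x hxU) (le_iSup₂ (f := fun x (_ : x ∈ Eᶜ) => ENNReal.ofReal |f x|) x hxE)

lemma decRearr_lt_measure {Ω : Type*} [MeasurableSpace Ω] {μ : Measure Ω} {f : Ω → ℝ}
    (hf : Measurable f) (c t : ℝ) (hc : 0 ≤ c)
    (h : ENNReal.ofReal c < decRearr μ f t) :
    ENNReal.ofReal t < μ {x | c < |f x|} := by
  by_contra hcon
  push_neg at hcon
  have hmeas : MeasurableSet {x | c < |f x|} :=
    measurableSet_lt measurable_const hf.abs
  have hle : decRearr μ f t ≤ ⨆ x ∈ {x | c < |f x|}ᶜ, ENNReal.ofReal |f x| :=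
    iInf₂_le_of_le _ hmeas (iInf_le_of_le hcon (le_refl _))
  have hsup : (⨆ x ∈ {x | c < |f x|}ᶜ, ENNReal.ofReal |f x|) ≤ ENNReal.ofReal c := by
    apply iSup₂_le
    intro x hx
    simp only [mem_compl_iff, mem_setOf_eq, not_lt] at hx
    exact ENNReal.ofReal_le_ofReal hx
  exact absurd (lt_of_lt_of_le h (le_trans hle hsup)) (lt_irrefl _)

-- approximation sequence for a positive extended real
noncomputable def useq (s : ℝ≥0∞) (m : ℕ) : ℝ≥0∞ :=
  min (ENNReal.ofReal (1 - 1/(m+2)) * s) (m+1)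

lemma useq_lt {s : ℝ≥0∞} (hs : s ≠ 0) (m : ℕ) : useq s m < s := by
  unfold useq
  rcases eq_or_ne s ⊤ with h | h
  · rw [h]
    exact lt_of_le_of_lt (min_le_right _ _) (by simp)
  · apply lt_of_le_of_lt (min_le_left _ _)
    have h1 : ENNReal.ofReal (1 - 1/(m+2)) < 1 := by
      apply ENNReal.ofReal_lt_one.2
      have : (0:ℝ) < 1/(m+2) := by positivity
      linarith
    calc ENNReal.ofReal (1 - 1/(m+2)) * s < 1 * s := ENNReal.mul_lt_mul_left hs h h1
      _ = s := one_mul s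

lemma useq_ne_top (s : ℝ≥0∞) (m : ℕ) : useq s m ≠ ⊤ :=
  ne_top_of_le_ne_top (by simp) (min_le_right _ _)

lemma useq_mono_s : ∀ (m : ℕ), Monotone (fun s => useq s m) := by
  intro m s s' hss
  exact min_le_min (mul_le_mul_right hss _) (le_refl _)

lemma useq_mono_m (s : ℝ≥0∞) : Monotone (useq s) := by
  intro m m' hmm
  unfold useq
  apply min_le_min
  · apply mul_le_mul_left
    apply ENNReal.ofReal_le_ofReal
    have hcast : (m:ℝ) ≤ m' := Nat.cast_le.2 hmm
    have h2 : (1:ℝ)/(m'+2) ≤ 1/(m+2) := by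
      apply one_div_le_one_div_of_le (by positivity)
      linarith
    linarith
  · exact add_le_add (Nat.cast_le.2 hmm) le_rfl

lemma useq_iSup (s : ℝ≥0∞) : (⨆ m, useq s m) = s := by
  have h1 : Tendsto (useq s) atTop (𝓝 (⨆ m, useq s m)) := tendsto_atTop_iSup (useq_mono_m s)
  rcases eq_or_ne s ⊤ with htop | htop
  · -- sup is ⊤
    rw [htop]
    apply le_antisymm le_top
    conv_lhs => rw [← ENNReal.iSup_natCast]
    apply iSup_le
    intro N
    apply le_trans ?_ (le_iSup (useq ⊤) N)
    unfold useq
    have hmul : ENNReal.ofReal (1 - 1/(N+2)) * ⊤ = ⊤ := by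
      rw [ENNReal.mul_top]
      simp only [ne_eq, ENNReal.ofReal_eq_zero, not_le]
      have h3 : (1:ℝ)/(N+2) < 1 := by
        rw [div_lt_one (by positivity)]; push_cast; linarith
      linarith
    rw [hmul, min_eq_right le_top]
    exact le_of_lt (ENNReal.lt_add_right (by simp) one_ne_zero)
  · -- s finite
    have htendr : Tendsto (fun m : ℕ => (1:ℝ) - 1/(m+2)) atTop (𝓝 1) := by
      have h0 : Tendsto (fun m : ℕ => (1:ℝ)/(m+2)) atTop (𝓝 0) := by
        have := (tendsto_one_div_add_atTop_nhds_zero_nat (𝕜 := ℝ)).comp (tendsto_add_atTop_nat 1)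
        convert this using 2 with m
        simp only [Function.comp_apply]
        push_cast
        ring_nf
      simpa using (tendsto_const_nhds (x := (1:ℝ)) (f := atTop)).sub h0
    have h2 : Tendsto (fun m : ℕ => ENNReal.ofReal (1 - 1/(m+2)) * s) atTop (𝓝 s) := by
      have hof : Tendsto (fun m : ℕ => ENNReal.ofReal (1 - 1/(m+2))) atTop (𝓝 1) := by
        have := (ENNReal.continuous_ofReal.tendsto 1).comp htendr
        simpa [Function.comp_def] using this
      have := ENNReal.Tendsto.mul_const hof (Or.inr htop)
      simpa using this
    have heq : ∀ᶠ m in atTop, ENNReal.ofReal (1 - 1/((m:ℕ)+2)) * s = useq s m := by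
      obtain ⟨N, hN⟩ := ENNReal.exists_nat_gt htop
      filter_upwards [eventually_ge_atTop N] with m hm
      unfold useq
      rw [min_eq_left]
      calc ENNReal.ofReal (1 - 1/(m+2)) * s ≤ 1 * s := by
            apply mul_le_mul_left
            rw [← ENNReal.ofReal_one]
            apply ENNReal.ofReal_le_ofReal
            have : (0:ℝ) ≤ 1/(m+2) := by positivity
            linarith
        _ = s := one_mul s
        _ ≤ (m:ℝ≥0∞) + 1 := by
            apply le_trans hN.le
            exact le_trans (Nat.cast_le.2 hm) le_self_add
    exact tendsto_nhds_unique h1 (h2.congr' heq)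

lemma core_bound {Ω : Type*} [MeasurableSpace Ω] (μ : Measure Ω) [IsFiniteMeasure μ]
    (f : Ω → ℝ) (hf : Measurable f) (q r : ℝ) (hq : 0 < q) (hr : 1 ≤ r)
    (n : ℕ) (u : Fin n → ℝ≥0∞) (τ : Fin (n+1) → ℝ)
    (hu_top : ∀ j, u j ≠ ⊤) (hu_anti : ∀ i j : Fin n, i ≤ j → u j ≤ u i)
    (hτ0 : τ 0 = 0) (hτ : Monotone τ)
    (hC : ∀ j : Fin n, ENNReal.ofReal (τ j.succ) < μ {x | (u j).toReal < |f x|}) :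
    ∑ j : Fin n, (u j) ^ q * ENNReal.ofReal (τ j.succ - τ j.castSucc) ^ r ≤
      ⨆ (k : ℕ) (A : Fin k → Set Ω) (_ : IsBorelPartition A),
        ∑ i, (⨅ x ∈ A i, ENNReal.ofReal |f x|) ^ q * μ (A i) ^ r := by
  classical
  have hr0 : (0:ℝ) < r := lt_of_lt_of_le one_pos hr
  rcases Nat.eq_zero_or_pos n with hn | hn
  · subst hn; simp
  -- real-valued data for the combinatorial lemma
  set lam : ℕ → ℝ := fun j => (u ⟨min j (n-1), by omega⟩).toReal with hlam
  have hlam_nonneg : ∀ j, 0 ≤ lam j := fun j => ENNReal.toReal_nonneg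
  have hlam_anti : ∀ i j, i ≤ j → lam j ≤ lam i := by
    intro i j hij
    apply (ENNReal.toReal_le_toReal (hu_top _) (hu_top _)).2
    exact hu_anti _ _ (by simp only [Fin.mk_le_mk]; omega)
  set C : ℕ → Set Ω := fun j => {x | lam j < |f x|} with hCdef
  have hCmeas : ∀ j, MeasurableSet (C j) := fun j =>
    measurableSet_lt measurable_const hf.abs
  have hCmono : ∀ i j, i ≤ j → C i ⊆ C j := by
    intro i j hij x hx
    exact lt_of_le_of_lt (hlam_anti i j hij) hx
  set a : ℕ → ℝ := fun j => (lam j) ^ q with ha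
  set t : ℕ → ℝ := fun j => τ ⟨min j n, by omega⟩ with htdef
  set mm : ℕ → ℝ := fun j => if j = 0 then 0 else (μ (C (j-1))).toReal with hmm
  have hτnonneg : ∀ j : Fin (n+1), 0 ≤ τ j := by
    intro j
    rw [← hτ0]
    exact hτ (by simp [Fin.le_def])
  have ht_mono : ∀ i j, i ≤ j → j ≤ n → t i ≤ t j := by
    intro i j hij hj
    exact hτ (by simp only [Fin.mk_le_mk]; omega)
  have hmm_mono : ∀ i j, i ≤ j → j ≤ n → mm i ≤ mm j := by
    intro i j hij hj
    simp only [hmm]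
    rcases Nat.eq_zero_or_pos i with h0 | h0
    · subst h0
      rcases Nat.eq_zero_or_pos j with h1 | h1
      · simp [h1]
      · simp only [if_pos rfl, if_neg (by omega : ¬ j = 0)]
        exact ENNReal.toReal_nonneg
    · simp only [if_neg (by omega : ¬ i = 0), if_neg (by omega : ¬ j = 0)]
      apply (ENNReal.toReal_le_toReal (measure_ne_top μ _) (measure_ne_top μ _)).2
      exact measure_mono (hCmono _ _ (by omega))
  have ht0 : t 0 = mm 0 := by
    have h1 : (⟨min 0 n, by omega⟩ : Fin (n+1)) = 0 := by
      apply Fin.ext; simp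
    simp only [htdef, hmm, if_pos rfl, h1, hτ0]
  have htmm : ∀ j, j ≤ n → t j ≤ mm j := by
    intro j hj
    rcases Nat.eq_zero_or_pos j with h0 | h0
    · subst h0; exact le_of_eq ht0
    · have hjf : j - 1 < n := by omega
      have hkey := hC ⟨j-1, hjf⟩
      have hCeq : {x | (u ⟨j-1, hjf⟩).toReal < |f x|} = C (j-1) := by
        have hfin : (⟨min (j-1) (n-1), by omega⟩ : Fin n) = ⟨j-1, hjf⟩ := by
          apply Fin.ext
          simp only [Fin.val_mk]
          omega
        simp only [hCdef, hlam, hfin]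
      have hsucceq : (⟨j-1, hjf⟩ : Fin n).succ = (⟨j, by omega⟩ : Fin (n+1)) := by
        simp only [Fin.succ_mk, Fin.mk.injEq]
        omega
      rw [hCeq, hsucceq] at hkey
      have := (ENNReal.ofReal_lt_iff_lt_toReal (hτnonneg _) (measure_ne_top μ _)).1 hkey
      simp only [htdef, hmm, if_neg (by omega : ¬ j = 0)]
      have hminj : min j n = j := by omega
      calc τ ⟨min j n, by omega⟩ = τ ⟨j, by omega⟩ := by congr 1; simp [hminj]
        _ ≤ (μ (C (j-1))).toReal := le_of_lt this
  obtain ⟨k, e, hk, he, hes, hsum⟩ := key_lemma r hr n a t mm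
    (fun j _ => Real.rpow_nonneg (hlam_nonneg j) q)
    (fun i j hij _ => Real.rpow_le_rpow (hlam_nonneg j) (hlam_anti i j hij) (le_of_lt hq))
    ht_mono hmm_mono ht0 htmm
  -- the partition
  set E : ℕ → Set Ω := fun i => if i = 0 then ∅ else if i ≤ k then C (e (i-1)) else univ
    with hE
  have hEmono : ∀ i j, i ≤ j → E i ⊆ E j := by
    intro i j hij
    rcases Nat.eq_zero_or_pos i with h0 | h0
    · subst h0; simp [hE]
    · have hine : ¬ i = 0 := by omega
      have hjne : ¬ j = 0 := by omega
      by_cases hik : i ≤ k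
      · by_cases hjk : j ≤ k
        · simp only [hE, if_neg hine, if_neg hjne, if_pos hik, if_pos hjk]
          apply hCmono
          rcases Nat.eq_or_lt_of_le (by omega : i - 1 ≤ j - 1) with h | h
          · rw [h]
          · exact le_of_lt (hes (i-1) (j-1) h (by omega))
        · simp only [hE, if_neg hine, if_neg hjne, if_pos hik, if_neg hjk]
          exact subset_univ _
      · have hjk : ¬ j ≤ k := by omega
        simp only [hE, if_neg hine, if_neg hjne, if_neg hik, if_neg hjk]
        exact subset_rfl
  have hEmeas : ∀ i, MeasurableSet (E i) := by
    intro i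
    simp only [hE]
    split
    · exact MeasurableSet.empty
    · split
      · exact hCmeas _
      · exact MeasurableSet.univ
  set A : Fin (k+1) → Set Ω := fun i => E ((i:ℕ)+1) \ E (i:ℕ) with hA
  have hpart : IsBorelPartition A := by
    refine ⟨fun i => (hEmeas _).diff (hEmeas _), ?_, ?_⟩
    · intro i j hij
      rcases Ne.lt_or_gt hij with h | h
      · apply Set.disjoint_left.2
        intro x hx hx'
        exact hx'.2 (hEmono ((i:ℕ)+1) (j:ℕ) h (hx.1))
      · apply Set.disjoint_left.2
        intro x hx hx'
        exact hx.2 (hEmono ((j:ℕ)+1) (i:ℕ) h (hx'.1))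
    · ext x
      simp only [mem_iUnion, mem_univ, iff_true]
      have hex : ∃ i, x ∈ E (i+1) := by
        refine ⟨k, ?_⟩
        simp only [hE, if_neg (by omega : ¬ k + 1 = 0), if_neg (by omega : ¬ k + 1 ≤ k)]
        exact mem_univ x
      set i0 := Nat.find hex with hi0
      have hspec : x ∈ E (i0 + 1) := Nat.find_spec hex
      have hi0le : i0 ≤ k := Nat.find_le (by
        simp only [hE, if_neg (by omega : ¬ k + 1 = 0), if_neg (by omega : ¬ k + 1 ≤ k)]
        exact mem_univ x)
      have hnot : x ∉ E i0 := by
        rcases Nat.eq_zero_or_pos i0 with h0 | h0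
        · rw [h0]; simp [hE]
        · intro hmem
          exact Nat.find_min hex (by omega : i0 - 1 < i0) (by
            have : i0 - 1 + 1 = i0 := by omega
            rw [this]; exact hmem)
      exact ⟨⟨i0, by omega⟩, hspec, hnot⟩
  -- lower bound for the partition value
  have hterm : ∀ i : Fin k,
      ENNReal.ofReal (a (e (i:ℕ)) *
        (mm (e (i:ℕ) + 1) - (if (i:ℕ) = 0 then mm 0 else mm (e ((i:ℕ)-1) + 1))) ^ r)
      ≤ (⨅ x ∈ A (Fin.castSucc i), ENNReal.ofReal |f x|) ^ q * μ (A (Fin.castSucc i)) ^ r := by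
    intro i
    have hik : (i:ℕ) < k := i.isLt
    have heik : e (i:ℕ) < n := he _ hik
    -- the set A i
    have hAi : A (Fin.castSucc i) = E ((i:ℕ)+1) \ E (i:ℕ) := rfl
    have hEi1 : E ((i:ℕ)+1) = C (e (i:ℕ)) := by
      simp only [hE, if_neg (by omega : ¬ (i:ℕ) + 1 = 0), if_pos (by omega : (i:ℕ) + 1 ≤ k)]
      congr 1
    -- bound on the infimum
    have hinf : ENNReal.ofReal (lam (e (i:ℕ))) ≤ ⨅ x ∈ A (Fin.castSucc i), ENNReal.ofReal |f x| := by
      apply le_iInf₂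
      intro x hx
      have hx1 : x ∈ C (e (i:ℕ)) := by rw [hAi, hEi1] at hx; exact hx.1
      exact ENNReal.ofReal_le_ofReal (le_of_lt hx1)
    -- measure of A i
    have hbase : μ (E (i:ℕ)) = ENNReal.ofReal (if (i:ℕ) = 0 then mm 0 else mm (e ((i:ℕ)-1) + 1)) := by
      rcases Nat.eq_zero_or_pos (i:ℕ) with h0 | h0
      · simp only [h0, if_pos rfl, hE, hmm]
        simp
      · have h1 : ¬ (i:ℕ) = 0 := by omega
        simp only [hE, if_neg h1, if_pos (by omega : (i:ℕ) ≤ k), hmm,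
          if_neg (by omega : ¬ e ((i:ℕ)-1) + 1 = 0)]
        rw [Nat.add_sub_cancel]
        exact (ENNReal.ofReal_toReal (measure_ne_top μ _)).symm
    have htop1 : μ (E ((i:ℕ)+1)) = ENNReal.ofReal (mm (e (i:ℕ) + 1)) := by
      rw [hEi1]
      simp only [hmm, if_neg (by omega : ¬ e (i:ℕ) + 1 = 0), Nat.add_sub_cancel]
      exact (ENNReal.ofReal_toReal (measure_ne_top μ _)).symm
    have hbnonneg : 0 ≤ (if (i:ℕ) = 0 then mm 0 else mm (e ((i:ℕ)-1) + 1)) := by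
      split
      · simp [hmm]
      · simp only [hmm, if_neg (by omega : ¬ e ((i:ℕ)-1) + 1 = 0)]
        exact ENNReal.toReal_nonneg
    have hmeasA : μ (A (Fin.castSucc i)) =
        ENNReal.ofReal (mm (e (i:ℕ) + 1) - (if (i:ℕ) = 0 then mm 0 else mm (e ((i:ℕ)-1) + 1))) := by
      rw [hAi, measure_diff (hEmono _ _ (by omega)) (hEmeas _).nullMeasurableSet
        (measure_ne_top μ _), hbase, htop1, ENNReal.ofReal_sub _ hbnonneg]
    -- combine
    have hgap : 0 ≤ mm (e (i:ℕ) + 1) - (if (i:ℕ) = 0 then mm 0 else mm (e ((i:ℕ)-1) + 1)) := by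
      apply sub_nonneg.2
      rcases Nat.eq_zero_or_pos (i:ℕ) with h0 | h0
      · rw [if_pos h0]
        exact hmm_mono 0 (e (i:ℕ) + 1) (by omega) (by have := he (i:ℕ) hik; omega)
      · simp only [if_neg (by omega : ¬ (i:ℕ) = 0)]
        have h1 := hes ((i:ℕ)-1) (i:ℕ) (by omega) hik
        exact hmm_mono (e ((i:ℕ)-1) + 1) (e (i:ℕ) + 1) (by omega)
          (by have := he (i:ℕ) hik; omega)
    rw [hmeasA, ENNReal.ofReal_mul (Real.rpow_nonneg (hlam_nonneg _) q)]
    apply mul_le_mul'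
    · rw [← ENNReal.ofReal_rpow_of_nonneg (hlam_nonneg _) (le_of_lt hq)]
      exact ENNReal.rpow_le_rpow hinf (le_of_lt hq)
    · rw [← ENNReal.ofReal_rpow_of_nonneg hgap (le_of_lt hr0)]
  -- assemble
  have hmmdiff : ∀ i, i < k →
      0 ≤ mm (e i + 1) - (if i = 0 then mm 0 else mm (e (i-1) + 1)) := by
    intro i hik
    apply sub_nonneg.2
    rcases Nat.eq_zero_or_pos i with h0 | h0
    · subst h0
      simp only [if_pos rfl]
      exact hmm_mono 0 (e 0 + 1) (by omega) (by have := he 0 hik; omega)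
    · simp only [if_neg (by omega : ¬ i = 0)]
      have h1 := hes (i-1) i (by omega) hik
      have h2 := he i hik
      exact hmm_mono (e (i-1) + 1) (e i + 1) (by omega) (by omega)
  have hchain : ∑ j : Fin n, (u j) ^ q * ENNReal.ofReal (τ j.succ - τ j.castSucc) ^ r
      ≤ ∑ i : Fin (k+1), (⨅ x ∈ A i, ENNReal.ofReal |f x|) ^ q * μ (A i) ^ r := by
    have hΔτ0 : ∀ j : Fin n, 0 ≤ τ j.succ - τ j.castSucc :=
      fun j => sub_nonneg.2 (hτ (by simp [Fin.le_def]))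
    have hperj : ∀ j : Fin n, (u j) ^ q * ENNReal.ofReal (τ j.succ - τ j.castSucc) ^ r
        = ENNReal.ofReal (a (j:ℕ) * (t ((j:ℕ)+1) - t (j:ℕ)) ^ r) := by
      intro j
      have hjn : (j:ℕ) < n := j.isLt
      have ht1 : t ((j:ℕ)+1) = τ j.succ := by
        simp only [htdef]
        congr 1
        simp only [Fin.ext_iff, Fin.val_succ]
        omega
      have ht2 : t (j:ℕ) = τ j.castSucc := by
        simp only [htdef]
        congr 1
        simp only [Fin.ext_iff, Fin.coe_castSucc]
        omega
      have hlamj : ENNReal.ofReal (lam (j:ℕ)) = u j := by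
        simp only [hlam]
        have : (⟨min (j:ℕ) (n-1), by omega⟩ : Fin n) = j := by
          simp only [Fin.ext_iff]
          omega
        rw [this]
        exact ENNReal.ofReal_toReal (hu_top j)
      rw [ht1, ht2, ENNReal.ofReal_mul (Real.rpow_nonneg (hlam_nonneg _) q),
        ← ENNReal.ofReal_rpow_of_nonneg (hlam_nonneg _) (le_of_lt hq),
        ← ENNReal.ofReal_rpow_of_nonneg (hΔτ0 j) (le_of_lt hr0), hlamj]
    calc ∑ j : Fin n, (u j) ^ q * ENNReal.ofReal (τ j.succ - τ j.castSucc) ^ r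
        = ENNReal.ofReal (∑ j ∈ Finset.range n, a j * (t (j+1) - t j) ^ r) := by
          rw [ENNReal.ofReal_sum_of_nonneg (fun j hj =>
            mul_nonneg (Real.rpow_nonneg (hlam_nonneg j) q) (Real.rpow_nonneg
              (sub_nonneg.2 (ht_mono j (j+1) (by omega)
                (by have := Finset.mem_range.1 hj; omega))) r)), Finset.sum_range]
          exact Finset.sum_congr rfl (fun j _ => hperj j)
      _ ≤ ENNReal.ofReal (∑ i ∈ Finset.range k,
            a (e i) * (mm (e i + 1) - (if i = 0 then mm 0 else mm (e (i-1) + 1))) ^ r) :=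
          ENNReal.ofReal_le_ofReal hsum
      _ = ∑ i : Fin k, ENNReal.ofReal (a (e (i:ℕ)) *
            (mm (e (i:ℕ) + 1) - (if (i:ℕ) = 0 then mm 0 else mm (e ((i:ℕ)-1) + 1))) ^ r) := by
          rw [ENNReal.ofReal_sum_of_nonneg (fun i hi =>
            mul_nonneg (Real.rpow_nonneg (hlam_nonneg _) q)
              (Real.rpow_nonneg (hmmdiff i (Finset.mem_range.1 hi)) r)), Finset.sum_range]
      _ ≤ ∑ i : Fin k, (⨅ x ∈ A (Fin.castSucc i), ENNReal.ofReal |f x|) ^ q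
            * μ (A (Fin.castSucc i)) ^ r := Finset.sum_le_sum (fun i _ => hterm i)
      _ ≤ ∑ i : Fin (k+1), (⨅ x ∈ A i, ENNReal.ofReal |f x|) ^ q * μ (A i) ^ r := by
          rw [Fin.sum_univ_castSucc]
          exact le_add_of_nonneg_right (zero_le)
  apply le_trans hchain
  apply le_iSup_of_le (k+1)
  apply le_iSup_of_le A
  exact le_iSup_of_le hpart le_rfl

lemma dir2 {Ω : Type*} [MeasurableSpace Ω] (μ : Measure Ω) [IsFiniteMeasure μ]
    (f : Ω → ℝ) (hf : Measurable f) (q r : ℝ) (hq : 0 < q) (hr : 1 ≤ r) :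
    ∀ (n : ℕ) (τ : Fin (n+1) → ℝ), τ 0 = 0 → StrictMono τ →
      ∑ j : Fin n, decRearr μ f (τ j.succ) ^ q *
          ENNReal.ofReal (τ j.succ - τ j.castSucc) ^ r ≤
        ⨆ (k : ℕ) (A : Fin k → Set Ω) (_ : IsBorelPartition A),
          ∑ i, (⨅ x ∈ A i, ENNReal.ofReal |f x|) ^ q * μ (A i) ^ r := by
  intro n
  induction n with
  | zero =>
    intro τ _ _
    simp only [Finset.univ_eq_empty, Finset.sum_empty]
    exact zero_le
  | succ n IH =>
    intro τ h0 hmono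
    by_cases hz : decRearr μ f (τ (Fin.last n).succ) = 0
    · -- drop the last (zero) term
      rw [Fin.sum_univ_castSucc, hz, ENNReal.zero_rpow_of_pos hq, zero_mul, add_zero]
      have hres : ∀ j : Fin n,
          decRearr μ f (τ (Fin.castSucc j).succ) ^ q *
            ENNReal.ofReal (τ (Fin.castSucc j).succ - τ (Fin.castSucc j).castSucc) ^ r
          = decRearr μ f ((τ ∘ Fin.castSucc) j.succ) ^ q *
            ENNReal.ofReal ((τ ∘ Fin.castSucc) j.succ - (τ ∘ Fin.castSucc) j.castSucc) ^ r := by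
        intro j
        have e1 : (Fin.castSucc j).succ = Fin.castSucc j.succ := by
          apply Fin.ext; simp
        have e2 : ((Fin.castSucc j) : Fin (n+1)).castSucc = Fin.castSucc j.castSucc := by
          apply Fin.ext; simp
        simp only [Function.comp_apply, e1, e2]
      rw [Finset.sum_congr rfl (fun j _ => hres j)]
      exact IH (τ ∘ Fin.castSucc) (by simpa using h0) (hmono.comp Fin.strictMono_castSucc)
    · -- all values positive
      have hpos : ∀ j : Fin (n+1), decRearr μ f (τ j.succ) ≠ 0 := by
        intro j hj0
        apply hz
        apply le_antisymm _ (zero_le)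
        rw [← hj0]
        exact decRearr_anti μ f (hmono.monotone (Fin.succ_le_succ_iff.2 (Fin.le_last j)))
      set s : Fin (n+1) → ℝ≥0∞ := fun j => decRearr μ f (τ j.succ) with hs
      have hterm : ∀ j : Fin (n+1),
          s j ^ q * ENNReal.ofReal (τ j.succ - τ j.castSucc) ^ r
          = ⨆ m : ℕ, (useq (s j) m) ^ q * ENNReal.ofReal (τ j.succ - τ j.castSucc) ^ r := by
        intro j
        have h1 : (⨆ m, useq (s j) m) ^ q * ENNReal.ofReal (τ j.succ - τ j.castSucc) ^ r
            = ⨆ m : ℕ, (useq (s j) m) ^ q * ENNReal.ofReal (τ j.succ - τ j.castSucc) ^ r := by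
          rw [my_rpow_iSup _ q hq, ENNReal.iSup_mul]
        rw [useq_iSup] at h1
        exact h1
      calc ∑ j : Fin (n+1), s j ^ q * ENNReal.ofReal (τ j.succ - τ j.castSucc) ^ r
          = ∑ j : Fin (n+1), ⨆ m : ℕ,
              (useq (s j) m) ^ q * ENNReal.ofReal (τ j.succ - τ j.castSucc) ^ r :=
            Finset.sum_congr rfl (fun j _ => hterm j)
        _ = ⨆ m : ℕ, ∑ j : Fin (n+1),
              (useq (s j) m) ^ q * ENNReal.ofReal (τ j.succ - τ j.castSucc) ^ r := by
            apply ENNReal.finsetSum_iSup_of_monotone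
            intro j m m' hmm
            exact mul_le_mul_left
              (ENNReal.rpow_le_rpow (useq_mono_m (s j) hmm) (le_of_lt hq)) _
        _ ≤ _ := by
            apply iSup_le
            intro m
            apply core_bound μ f hf q r hq hr (n+1) (fun j => useq (s j) m) τ
              (fun j => useq_ne_top _ m)
              (fun i j hij => useq_mono_s m (decRearr_anti μ f
                (hmono.monotone (Fin.succ_le_succ_iff.2 hij))))
              h0 hmono.monotone
            intro j
            apply decRearr_lt_measure hf _ _ ENNReal.toReal_nonneg
            rw [ENNReal.ofReal_toReal (useq_ne_top _ m)]
            exact useq_lt (hpos j) m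

lemma dir1 {Ω : Type*} [MeasurableSpace Ω] (μ : Measure Ω) [IsFiniteMeasure μ]
    (f : Ω → ℝ) (q r : ℝ) (hq : 0 < q) (hr : 1 ≤ r)
    (n : ℕ) (A : Fin n → Set Ω) (hA : IsBorelPartition A) :
    ∑ i, (⨅ x ∈ A i, ENNReal.ofReal |f x|) ^ q * μ (A i) ^ r ≤
      ⨆ (k : ℕ) (τ : Fin (k + 1) → ℝ) (_ : τ 0 = 0) (_ : StrictMono τ),
        ∑ j : Fin k, decRearr μ f (τ j.succ) ^ q *
          ENNReal.ofReal (τ j.succ - τ j.castSucc) ^ r := by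
  classical
  have hr0 : (0:ℝ) < r := lt_of_lt_of_le one_pos hr
  set a : Fin n → ℝ≥0∞ := fun i => ⨅ x ∈ A i, ENNReal.ofReal |f x| with ha
  set g : Fin n → ℝ≥0∞ := fun i => a i ^ q * μ (A i) ^ r with hg
  set S : Finset (Fin n) := Finset.univ.filter (fun i => μ (A i) ≠ 0) with hS
  have hsum_S : ∑ i, g i = ∑ i ∈ S, g i := by
    symm
    apply Finset.sum_subset (Finset.subset_univ S)
    intro i _ hiS
    have h0 : μ (A i) = 0 := by
      by_contra hne
      exact hiS (Finset.mem_filter.2 ⟨Finset.mem_univ i, hne⟩)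
    simp only [hg, h0, ENNReal.zero_rpow_of_pos hr0, mul_zero]
  rw [hsum_S]
  rcases Finset.eq_empty_or_nonempty S with hSe | hSne
  · rw [hSe, Finset.sum_empty]
    exact zero_le
  -- k = |S| ≥ 1
  set k : ℕ := S.card with hk
  have hk1 : 1 ≤ k := Finset.card_pos.2 hSne
  haveI : NeZero k := ⟨by omega⟩
  have hk0 : 0 < k := hk1
  set ord : Fin k ≃o {x // x ∈ S} := S.orderIsoOfFin rfl with hord
  set v : Fin k → ℝ≥0∞ᵒᵈ := fun j => OrderDual.toDual (a ((ord j : Fin n))) with hv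
  set σ : Equiv.Perm (Fin k) := Tuple.sort v with hσ
  set idx : Fin k → Fin n := fun j => ((ord (σ j)) : Fin n) with hidx
  have hidx_inj : Function.Injective idx := by
    intro i j hij
    apply σ.injective
    apply (OrderIso.injective ord)
    exact Subtype.coe_injective hij
  have hidx_mem : ∀ j, idx j ∈ S := fun j => (ord (σ j)).2
  have hb_anti : ∀ i j : Fin k, i ≤ j → a (idx j) ≤ a (idx i) := by
    intro i j hij
    have h1 := Tuple.monotone_sort v hij
    rw [← hσ] at h1
    exact h1
  have hμ_ne : ∀ j : Fin k, μ (A (idx j)) ≠ 0 := by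
    intro j
    exact (Finset.mem_filter.1 (hidx_mem j)).2
  have hA_ne : ∀ j : Fin k, (A (idx j)).Nonempty :=
    fun j => nonempty_of_measure_ne_zero (hμ_ne j)
  have hb_ne_top : ∀ j : Fin k, a (idx j) ≠ ⊤ := by
    intro j
    obtain ⟨x, hx⟩ := hA_ne j
    apply ne_top_of_le_ne_top (by simp : ENNReal.ofReal |f x| ≠ ⊤)
    exact iInf₂_le x hx
  -- sum over S as sum over Fin k
  have hsum_k : ∑ i ∈ S, g i = ∑ j : Fin k, g (idx j) := by
    rw [← Finset.sum_coe_sort S g]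
    exact (Fintype.sum_equiv (σ.trans ord.toEquiv) (fun j => g (idx j))
      (fun x => g (x : Fin n)) (fun j => rfl)).symm
  rw [hsum_k]
  -- weights
  set w : Fin k → ℝ := fun j => (μ (A (idx j))).toReal with hw
  have hw_pos : ∀ j, 0 < w j := by
    intro j
    apply ENNReal.toReal_pos (hμ_ne j) (measure_ne_top μ _)
  set w' : ℕ → ℝ := fun l => if h : l < k then w ⟨l, h⟩ else 1 with hw'
  have hw'_pos : ∀ l, 0 < w' l := by
    intro l
    simp only [hw']
    split
    · exact hw_pos _
    · exact one_pos
  set cum : ℕ → ℝ := fun j => ∑ l ∈ Finset.range j, w' l with hcum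
  have hcum_pos : ∀ j, 1 ≤ j → 0 < cum j := by
    intro j hj
    apply Finset.sum_pos (fun l _ => hw'_pos l)
    exact Finset.nonempty_range_iff.2 (by omega)
  -- the marked points, for a parameter ε
  set τf : ℝ → Fin (k+1) → ℝ := fun ε j =>
    cum (j:ℕ) - (if (j:ℕ) = 0 then 0 else ε * (2⁻¹:ℝ)^(j:ℕ)) with hτf
  have hτ0 : ∀ ε, τf ε 0 = 0 := by
    intro ε
    simp [hτf, hcum]
  have hΔ : ∀ ε (j : Fin k), τf ε j.succ - τf ε j.castSucc
      = w' (j:ℕ) + ((if (j:ℕ) = 0 then 0 else ε * (2⁻¹:ℝ)^(j:ℕ)) - ε * (2⁻¹:ℝ)^((j:ℕ)+1)) := by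
    intro ε j
    have hne : ¬ ((j:ℕ) + 1 = 0) := by omega
    simp only [hτf, Fin.val_succ, Fin.coe_castSucc, hcum, Finset.sum_range_succ, if_neg hne]
    ring
  have hτmono : ∀ ε, 0 < ε → ε < w' 0 → StrictMono (τf ε) := by
    intro ε hε0 hεw
    apply Fin.strictMono_iff_lt_succ.2
    intro j
    have hd := hΔ ε j
    have : 0 < τf ε j.succ - τf ε j.castSucc := by
      rw [hd]
      rcases Nat.eq_zero_or_pos (j:ℕ) with h0 | h0
      · rw [h0]
        norm_num
        linarith [hw'_pos 0]
      · rw [if_neg (by omega)]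
        have h1 : ε * (2⁻¹:ℝ)^((j:ℕ)+1) < ε * (2⁻¹:ℝ)^(j:ℕ) := by
          apply mul_lt_mul_of_pos_left _ hε0
          apply pow_lt_pow_right_of_lt_one₀ (by norm_num) (by norm_num)
          omega
        linarith [hw'_pos (j:ℕ)]
    linarith
  -- rearrangement lower bound at the marked points
  have hfstar : ∀ ε, 0 < ε → ∀ j : Fin k,
      a (idx j) ≤ decRearr μ f (τf ε j.succ) := by
    intro ε hε0 j
    set idxn : ℕ → Fin n := fun l => idx (if h : l < k then ⟨l, h⟩ else ⟨0, hk0⟩) with hidxn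
    set U : Set Ω := ⋃ l ∈ Finset.range ((j:ℕ)+1), A (idxn l) with hU
    have hidxn_eq : ∀ l (hl : l < k), idxn l = idx ⟨l, hl⟩ := by
      intro l hl
      simp only [hidxn, dif_pos hl]
    have hμU : μ U = ENNReal.ofReal (cum ((j:ℕ)+1)) := by
      rw [hU, measure_biUnion_finset]
      · have hterm : ∀ l ∈ Finset.range ((j:ℕ)+1), μ (A (idxn l)) = ENNReal.ofReal (w' l) := by
          intro l hl
          have hlk : l < k := by
            have := Finset.mem_range.1 hl
            omega
          rw [hidxn_eq l hlk]
          simp only [hw', dif_pos hlk]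
          exact (ENNReal.ofReal_toReal (measure_ne_top μ _)).symm
        rw [Finset.sum_congr rfl hterm, hcum]
        rw [ENNReal.ofReal_sum_of_nonneg (fun l _ => (hw'_pos l).le)]
      · intro l hl l' hl' hll
        have hlk : l < k := by have := Finset.mem_range.1 hl; omega
        have hlk' : l' < k := by have := Finset.mem_range.1 hl'; omega
        apply hA.2.1
        rw [hidxn_eq l hlk, hidxn_eq l' hlk']
        intro hcon
        exact hll (by
          have := hidx_inj hcon
          simpa [Fin.ext_iff] using this)
      · intro l _
        exact hA.1 _
    apply le_decRearr _ _ U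
    · rw [hμU]
      apply (ENNReal.ofReal_lt_ofReal_iff (hcum_pos _ (by omega))).2
      simp only [hτf, Fin.val_succ]
      have : 0 < ε * (2⁻¹:ℝ)^((j:ℕ)+1) := by positivity
      rw [if_neg (by omega)]
      linarith
    · intro x hx
      simp only [hU, mem_iUnion] at hx
      obtain ⟨l, hl, hxl⟩ := hx
      have hlk : l < k := by have := Finset.mem_range.1 hl; omega
      have hle : a (idx j) ≤ a (idxn l) := by
        rw [hidxn_eq l hlk]
        apply hb_anti
        simp only [Fin.mk_le_mk, Fin.le_def]
        have := Finset.mem_range.1 hl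
        omega
      exact le_trans hle (iInf₂_le x hxl)
  -- candidate value for each ε
  have hcand : ∀ ε, 0 < ε → ε < w' 0 →
      (a (idx 0)) ^ q * ENNReal.ofReal (w' 0 - ε * 2⁻¹) ^ r
        + ∑ j ∈ Finset.univ.filter (fun j : Fin k => ¬ (j:ℕ) = 0), g (idx j) ≤
      ⨆ (m : ℕ) (τ : Fin (m + 1) → ℝ) (_ : τ 0 = 0) (_ : StrictMono τ),
        ∑ j : Fin m, decRearr μ f (τ j.succ) ^ q *
          ENNReal.ofReal (τ j.succ - τ j.castSucc) ^ r := by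
    intro ε hε0 hεw
    have hbound : (a (idx 0)) ^ q * ENNReal.ofReal (w' 0 - ε * 2⁻¹) ^ r
        + ∑ j ∈ Finset.univ.filter (fun j : Fin k => ¬ (j:ℕ) = 0), g (idx j) ≤
        ∑ j : Fin k, decRearr μ f (τf ε j.succ) ^ q *
          ENNReal.ofReal (τf ε j.succ - τf ε j.castSucc) ^ r := by
      have hsplit : ∑ j : Fin k, decRearr μ f (τf ε j.succ) ^ q *
          ENNReal.ofReal (τf ε j.succ - τf ε j.castSucc) ^ r
          = decRearr μ f (τf ε (0:Fin k).succ) ^ q *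
              ENNReal.ofReal (τf ε (0:Fin k).succ - τf ε (0:Fin k).castSucc) ^ r
            + ∑ j ∈ Finset.univ.filter (fun j : Fin k => ¬ (j:ℕ) = 0),
                decRearr μ f (τf ε j.succ) ^ q *
                ENNReal.ofReal (τf ε j.succ - τf ε j.castSucc) ^ r := by
        rw [← Finset.sum_filter_add_sum_filter_not Finset.univ (fun j : Fin k => (j:ℕ) = 0)]
        congr 1
        have : Finset.univ.filter (fun j : Fin k => (j:ℕ) = 0) = {⟨0, by omega⟩} := by
          ext j
          simp only [Finset.mem_filter, Finset.mem_univ, true_and, Finset.mem_singleton,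
            Fin.ext_iff]
        rw [this, Finset.sum_singleton]
        rfl
      rw [hsplit]
      apply add_le_add
      · apply mul_le_mul'
        · exact ENNReal.rpow_le_rpow (hfstar ε hε0 0) (le_of_lt hq)
        · apply ENNReal.rpow_le_rpow _ (le_of_lt hr0)
          apply ENNReal.ofReal_le_ofReal
          rw [hΔ ε 0]
          norm_num
      · apply Finset.sum_le_sum
        intro j hj
        have hj0 : (j:ℕ) ≠ 0 := (Finset.mem_filter.1 hj).2
        apply mul_le_mul'
        · exact ENNReal.rpow_le_rpow (hfstar ε hε0 j) (le_of_lt hq)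
        · apply ENNReal.rpow_le_rpow _ (le_of_lt hr0)
          rw [show μ (A (idx j)) = ENNReal.ofReal (w j) from
            (ENNReal.ofReal_toReal (measure_ne_top μ _)).symm]
          apply ENNReal.ofReal_le_ofReal
          rw [hΔ ε j, if_neg hj0]
          have h1 : ε * (2⁻¹:ℝ)^((j:ℕ)+1) ≤ ε * (2⁻¹)^(j:ℕ) := by
            apply mul_le_mul_of_nonneg_left _ hε0.le
            apply pow_le_pow_of_le_one (by norm_num) (by norm_num)
            omega
          have h2 : w' (j:ℕ) = w j := by
            simp only [hw', dif_pos j.isLt, Fin.eta]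
          linarith
    apply le_trans hbound
    apply le_iSup_of_le k
    apply le_iSup_of_le (τf ε)
    apply le_iSup_of_le (hτ0 ε)
    exact le_iSup_of_le (hτmono ε hε0 hεw) le_rfl
  -- pass to the limit ε → 0
  have hw'w : w' 0 = w 0 := by
    have h00 : (⟨0, hk0⟩ : Fin k) = 0 := by apply Fin.ext; simp
    simp only [hw', dif_pos hk0, h00]
  have hsplitg : ∑ j : Fin k, g (idx j)
      = g (idx 0) + ∑ j ∈ Finset.univ.filter (fun j : Fin k => ¬ (j:ℕ) = 0), g (idx j) := by
    rw [← Finset.sum_filter_add_sum_filter_not Finset.univ (fun j : Fin k => (j:ℕ) = 0)]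
    congr 1
    have : Finset.univ.filter (fun j : Fin k => (j:ℕ) = 0) = {(0 : Fin k)} := by
      ext j
      simp only [Finset.mem_filter, Finset.mem_univ, true_and, Finset.mem_singleton,
        Fin.ext_iff]
      simp
    rw [this, Finset.sum_singleton]
  rw [hsplitg]
  set T := ∑ j ∈ Finset.univ.filter (fun j : Fin k => ¬ (j:ℕ) = 0), g (idx j) with hT
  have hg0 : g (idx 0) = (a (idx 0)) ^ q * ENNReal.ofReal (w 0) ^ r := by
    have hmm : μ (A (idx 0)) = ENNReal.ofReal (w 0) :=
      (ENNReal.ofReal_toReal (measure_ne_top μ _)).symm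
    simp only [hg, hmm]
  rw [hg0]
  -- the sequence of epsilons
  set eps : ℕ → ℝ := fun i => w' 0 / (i + 2) with heps
  have heps_pos : ∀ i, 0 < eps i := by
    intro i
    apply div_pos (hw'_pos 0)
    positivity
  have heps_lt : ∀ i, eps i < w' 0 := by
    intro i
    rw [heps]
    rw [div_lt_iff₀ (by positivity)]
    nlinarith [hw'_pos 0]
  have heps_tendsto : Tendsto eps atTop (𝓝 0) := by
    have h1 : Tendsto (fun i : ℕ => (1:ℝ)/(i+2)) atTop (𝓝 0) := by
      have := (tendsto_one_div_add_atTop_nhds_zero_nat (𝕜 := ℝ)).comp (tendsto_add_atTop_nat 1)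
      convert this using 2 with m
      simp only [Function.comp_apply]
      push_cast
      ring_nf
    have := h1.const_mul (w' 0)
    simp only [mul_zero] at this
    convert this using 2 with i
    rw [heps]
    ring
  have hFt : Tendsto (fun i => (a (idx 0)) ^ q * ENNReal.ofReal (w' 0 - eps i * 2⁻¹) ^ r + T)
      atTop (𝓝 ((a (idx 0)) ^ q * ENNReal.ofReal (w 0) ^ r + T)) := by
    apply Filter.Tendsto.add _ tendsto_const_nhds
    apply ENNReal.Tendsto.const_mul _ (Or.inr (ENNReal.rpow_ne_top_of_nonneg (le_of_lt hq)
      (hb_ne_top 0)))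
    have hreal : Tendsto (fun i => w' 0 - eps i * 2⁻¹) atTop (𝓝 (w 0)) := by
      rw [← hw'w]
      have := ((heps_tendsto.const_mul (2⁻¹:ℝ)).const_sub (w' 0))
      simp only [mul_zero, sub_zero] at this
      convert this using 2 with i
      ring
    exact (ENNReal.continuous_rpow_const.tendsto _).comp
      ((ENNReal.continuous_ofReal.tendsto _).comp hreal)
  apply le_of_tendsto hFt
  apply Filter.Eventually.of_forall
  intro i
  exact hcand (eps i) (heps_pos i) (heps_lt i)

/-- For `0 < p < q < ∞` and a finite Borel measure `μ`, the
`Λ_{p,q}(μ)` functional of a Borel function `f` equals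
`sup_𝒯 (Σⱼ f*(τⱼ)^q (τⱼ - τⱼ₋₁)^{q/p})^{1/q}` over finite sets
`𝒯 = {τ₀ = 0 < τ₁ < ⋯ < τₙ}`. -/
theorem lambdaSup_eq_sup_rearrangement
    {Ω : Type*} [TopologicalSpace Ω] [CompactSpace Ω] [T2Space Ω]
    [MeasurableSpace Ω] [BorelSpace Ω]
    (p q : ℝ) (hp : 0 < p) (hpq : p < q)
    (μ : Measure Ω) [IsFiniteMeasure μ]
    (f : Ω → ℝ) (hf : Measurable f) :
    LambdaSup μ p q f =
      ⨆ (n : ℕ) (τ : Fin (n + 1) → ℝ) (_ : τ 0 = 0) (_ : StrictMono τ),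
        (∑ j : Fin n, decRearr μ f (τ j.succ) ^ q *
          ENNReal.ofReal (τ j.succ - τ j.castSucc) ^ (q / p)) ^ (1 / q) := by
  have hq : 0 < q := lt_trans hp hpq
  have h1q : (0:ℝ) < 1/q := by positivity
  have hr : 1 ≤ q / p := le_of_lt ((one_lt_div hp).2 hpq)
  have hinner : (⨆ (n : ℕ) (A : Fin n → Set Ω) (_ : IsBorelPartition A),
        ∑ i, (⨅ x ∈ A i, ENNReal.ofReal |f x|) ^ q * μ (A i) ^ (q / p))
      = ⨆ (n : ℕ) (τ : Fin (n + 1) → ℝ) (_ : τ 0 = 0) (_ : StrictMono τ),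
        ∑ j : Fin n, decRearr μ f (τ j.succ) ^ q *
          ENNReal.ofReal (τ j.succ - τ j.castSucc) ^ (q / p) := by
    apply le_antisymm
    · apply iSup_le; intro n
      apply iSup_le; intro A
      apply iSup_le; intro hA
      exact dir1 μ f q (q/p) hq hr n A hA
    · apply iSup_le; intro n
      apply iSup_le; intro τ
      apply iSup_le; intro h0
      apply iSup_le; intro hmono
      exact dir2 μ f hf q (q/p) hq hr n τ h0 hmono
  have eL : LambdaSup μ p q f
      = (⨆ (n : ℕ) (A : Fin n → Set Ω) (_ : IsBorelPartition A),
          ∑ i, (⨅ x ∈ A i, ENNReal.ofReal |f x|) ^ q * μ (A i) ^ (q / p)) ^ (1/q) := by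
    rw [LambdaSup, my_rpow_iSup _ _ h1q]
    apply iSup_congr; intro n
    rw [my_rpow_iSup _ _ h1q]
    apply iSup_congr; intro A
    rw [my_rpow_iSup _ _ h1q]
  have eR : (⨆ (n : ℕ) (τ : Fin (n + 1) → ℝ) (_ : τ 0 = 0) (_ : StrictMono τ),
        (∑ j : Fin n, decRearr μ f (τ j.succ) ^ q *
          ENNReal.ofReal (τ j.succ - τ j.castSucc) ^ (q / p)) ^ (1 / q))
      = (⨆ (n : ℕ) (τ : Fin (n + 1) → ℝ) (_ : τ 0 = 0) (_ : StrictMono τ),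
        ∑ j : Fin n, decRearr μ f (τ j.succ) ^ q *
          ENNReal.ofReal (τ j.succ - τ j.castSucc) ^ (q / p)) ^ (1/q) := by
    rw [my_rpow_iSup _ _ h1q]
    apply iSup_congr; intro n
    rw [my_rpow_iSup _ _ h1q]
    apply iSup_congr; intro τ
    rw [my_rpow_iSup _ _ h1q]
    apply iSup_congr; intro h0
    rw [my_rpow_iSup _ _ h1q]
  rw [eL, eR, hinner]
end

section
/- Suppose 0 < q < p < ∞ and μ is a finite Borel measure on a compact Hausdorff space Ω. For every Borel function f, ‖f‖_{Λ_{p,q}(μ)} = inf_𝒯 (Σ_{j=1}^n f*(τ_{j−1})^q (τ_j − τ_{j−1})^{q/p})^{1/q}, where the infimum runs over all finite sets 𝒯 = {τ_0 = 0 < τ_1 < ⋯ < τ_n = μ(Ω)} and f* denotes the decreasing rearrangement of |f|. -/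
open Set Filter Topology MeasureTheory ENNReal

/-! Write `r = q/p ∈ (0, 1)`, call `f*(τ)^q (τ' - τ)^r` the cost of the band `[τ, τ']` and
`(sup_A |f|)^q μ(A)^r` the cost of the piece `A`.

`LambdaInf ≤ RHS`: a chain `0 = τ₀ ≤ ⋯ ≤ τₙ ≤ t` is turned into a partition of a set `E` of
measure `t` containing `{|f| > f*(τₙ)}`, by induction on `n`. If merging the last two bands does
not increase the cost, recurse on the shorter chain. Otherwise `f*(τₙ) < f*(τₙ₋₁)`, so
`G = {|f| > f*(τₙ)}` has measure `s ∈ [τₙ₋₁, τₙ]`. The piece `E \ G` costs at most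
`f*(τₙ)^q (t - s)^r`, and as the cost of two adjacent bands is concave in the common endpoint,
moving that endpoint from `τₙ` down to `s` does not increase the cost; recurse on `G` with `s` as
the new endpoint.

`RHS ≤ LambdaInf`: order the pieces of a partition by decreasing `sup |f|` and cut at the
cumulative measures; at each cut point `f*` is at most the `sup |f|` of the next piece. -/

section Rearrangement

variable {Ω : Type*} [MeasurableSpace Ω] (μ : Measure Ω) (f : Ω → ℝ)

lemma decRearr_le_iSup_compl {E : Set Ω} (hE : MeasurableSet E) {t : ℝ}
    (ht : μ E ≤ ENNReal.ofReal t) : decRearr μ f t ≤ ⨆ x ∈ Eᶜ, ENNReal.ofReal |f x| :=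
  iInf₂_le_of_le E hE (iInf_le _ ht)

lemma decRearr_antitone : Antitone (decRearr μ f) := fun _ _ hst =>
  le_iInf₂ fun _ hE => le_iInf fun ht =>
    decRearr_le_iSup_compl μ f hE (ht.trans (ENNReal.ofReal_le_ofReal hst))

lemma measure_lt_le_of_decRearr_lt {t : ℝ} {s : ℝ≥0∞} (hs : decRearr μ f t < s) :
    μ {x | s < ENNReal.ofReal |f x|} ≤ ENNReal.ofReal t := by
  obtain ⟨E, hE, ht, hlt⟩ : ∃ E, MeasurableSet E ∧ μ E ≤ ENNReal.ofReal t ∧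
      (⨆ x ∈ Eᶜ, ENNReal.ofReal |f x|) < s := by
    simpa only [decRearr, iInf_lt_iff, exists_prop] using hs
  refine (measure_mono fun x (hx : s < _) => ?_).trans ht
  by_contra hxE
  exact lt_irrefl s (hx.trans_le ((le_biSup (fun y => ENNReal.ofReal |f y|) hxE).trans hlt.le))

lemma measure_decRearr_lt_le (t : ℝ) :
    μ {x | decRearr μ f t < ENNReal.ofReal |f x|} ≤ ENNReal.ofReal t := by
  obtain hv | hv := eq_top_or_lt_top (decRearr μ f t)
  · simp [hv]
  obtain ⟨u, hu_anti, hu_mem, hu_lim⟩ := exists_seq_strictAnti_tendsto' hv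
  have hunion : {x | decRearr μ f t < ENNReal.ofReal |f x|} =
      ⋃ n, {x | u n < ENNReal.ofReal |f x|} := by
    ext x
    simp only [mem_ofPred_eq, mem_iUnion]
    exact ⟨fun hx => (hu_lim.eventually (gt_mem_nhds hx)).exists,
      fun ⟨n, hn⟩ => (hu_mem n).1.trans hn⟩
  have hmono : Monotone fun n => {x | u n < ENNReal.ofReal |f x|} :=
    fun m n hmn x (hx : u m < _) => (hu_anti.antitone hmn).trans_lt hx
  rw [hunion, hmono.measure_iUnion]
  exact iSup_le fun n => measure_lt_le_of_decRearr_lt μ f (hu_mem n).1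

variable {f} in
lemma le_measure_lt_of_lt_decRearr (hf : Measurable f) {t : ℝ} {w : ℝ≥0∞}
    (hw : w < decRearr μ f t) : ENNReal.ofReal t ≤ μ {x | w < ENNReal.ofReal |f x|} := by
  by_contra! h
  refine hw.not_ge ((decRearr_le_iSup_compl μ f
    (measurableSet_lt measurable_const hf.abs.ennreal_ofReal) h.le).trans ?_)
  exact iSup₂_le fun x hx => not_lt.mp hx

end Rearrangement

section Concavity

variable {r : ℝ}

lemma concaveOn_weighted_rpow_sub (hr0 : 0 ≤ r) (hr1 : r ≤ 1) {W₁ W₂ : ℝ} (hW₁ : 0 ≤ W₁)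
    (hW₂ : 0 ≤ W₂) (A C : ℝ) :
    ConcaveOn ℝ (Icc A C) fun x => W₁ * (x - A) ^ r + W₂ * (C - x) ^ r := by
  have h₁ : ConcaveOn ℝ (Ici A) fun x => (x - A) ^ r := by
    simpa [Function.comp_def, neg_add_eq_sub] using
      (Real.concaveOn_rpow hr0 hr1).translate_right (-A)
  have h₂ : ConcaveOn ℝ (Iic C) fun x => (C - x) ^ r := by
    have h := (Real.concaveOn_rpow hr0 hr1).comp_affineMap
      (AffineMap.const ℝ ℝ C - AffineMap.id ℝ ℝ)
    have hpre : ⇑(AffineMap.const ℝ ℝ C - AffineMap.id ℝ ℝ) ⁻¹' Ici 0 = Iic C := by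
      ext x
      simp
    rw [hpre] at h
    simpa [Function.comp_def] using h
  exact ((h₁.subset Icc_subset_Ici_self (convex_Icc A C)).smul hW₁).add
    ((h₂.subset Icc_subset_Iic_self (convex_Icc A C)).smul hW₂)

lemma coe_mul_ofReal_rpow_add_eq_ofReal (hr : 0 ≤ r) (a b : NNReal) {A C y : ℝ}
    (hy : y ∈ Icc A C) :
    (a : ℝ≥0∞) * ENNReal.ofReal (y - A) ^ r + b * ENNReal.ofReal (C - y) ^ r =
      ENNReal.ofReal (a * (y - A) ^ r + b * (C - y) ^ r) := by
  have hyA : 0 ≤ y - A := sub_nonneg.2 hy.1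
  have hCy : 0 ≤ C - y := sub_nonneg.2 hy.2
  rw [ENNReal.ofReal_rpow_of_nonneg hyA hr, ENNReal.ofReal_rpow_of_nonneg hCy hr,
    ENNReal.ofReal_add (mul_nonneg a.coe_nonneg (Real.rpow_nonneg hyA r))
      (mul_nonneg b.coe_nonneg (Real.rpow_nonneg hCy r)),
    ENNReal.ofReal_mul a.coe_nonneg, ENNReal.ofReal_mul b.coe_nonneg, ENNReal.ofReal_coe_nnreal,
    ENNReal.ofReal_coe_nnreal]

/-- Cutting `[A, C]` at `C` is not cutting at all; by concavity in the cut point, if the cut at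
`B` beats it, no cut to the left of `B` is better. -/
lemma split_cost_le_of_lt {a b : ℝ≥0∞} {A B C x : ℝ} (hr0 : 0 < r) (hr1 : r ≤ 1)
    (hAx : A ≤ x) (hxB : x ≤ B) (hBC : B ≤ C)
    (h : a * ENNReal.ofReal (B - A) ^ r + b * ENNReal.ofReal (C - B) ^ r <
      a * ENNReal.ofReal (C - A) ^ r) :
    a * ENNReal.ofReal (x - A) ^ r + b * ENNReal.ofReal (C - x) ^ r ≤
      a * ENNReal.ofReal (B - A) ^ r + b * ENNReal.ofReal (C - B) ^ r := by
  obtain rfl | hxB := hxB.eq_or_lt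
  · exact le_rfl
  have hBC : B < C := hBC.lt_of_ne <| by
    rintro rfl
    simp [ENNReal.zero_rpow_of_pos hr0] at h
  have hpos {y z : ℝ} (hyz : y < z) : ENNReal.ofReal (z - y) ^ r ≠ 0 :=
    (ENNReal.rpow_pos (ENNReal.ofReal_pos.2 (sub_pos.2 hyz)) ENNReal.ofReal_ne_top).ne'
  lift a to NNReal using fun ha => by simp [ha, ENNReal.top_mul (hpos (hAx.trans_lt hxB))] at h
  lift b to NNReal using fun hb => by simp [hb, ENNReal.top_mul (hpos hBC)] at h
  have hB : B ∈ Icc A C := ⟨hAx.trans hxB.le, hBC.le⟩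
  have hC : C ∈ Icc A C := ⟨hB.1.trans hBC.le, le_rfl⟩
  have hCA : (a : ℝ≥0∞) * ENNReal.ofReal (C - A) ^ r =
      ENNReal.ofReal (a * (C - A) ^ r + b * (C - C) ^ r) := by
    rw [← coe_mul_ofReal_rpow_add_eq_ofReal hr0.le a b hC, sub_self, ENNReal.ofReal_zero,
      ENNReal.zero_rpow_of_pos hr0, mul_zero, add_zero]
  rw [coe_mul_ofReal_rpow_add_eq_ofReal hr0.le a b hB, hCA, ENNReal.ofReal_lt_ofReal_iff'] at h
  rw [coe_mul_ofReal_rpow_add_eq_ofReal hr0.le a b ⟨hAx, hxB.le.trans hBC.le⟩,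
    coe_mul_ofReal_rpow_add_eq_ofReal hr0.le a b hB]
  exact ENNReal.ofReal_le_ofReal <|
    (concaveOn_weighted_rpow_sub hr0.le hr1 a.coe_nonneg b.coe_nonneg A C).left_le_of_le_right''
      ⟨hAx, hxB.le.trans hBC.le⟩ hC hxB.le hBC h.1.le

lemma lt_of_split_cost_lt {a b : ℝ≥0∞} {A B C : ℝ} (hr0 : 0 ≤ r) (hr1 : r ≤ 1) (hAB : A ≤ B)
    (hBC : B ≤ C)
    (h : a * ENNReal.ofReal (B - A) ^ r + b * ENNReal.ofReal (C - B) ^ r <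
      a * ENNReal.ofReal (C - A) ^ r) : b < a := by
  by_contra! hab
  refine h.not_ge ?_
  calc a * ENNReal.ofReal (C - A) ^ r
      ≤ a * ENNReal.ofReal (B - A) ^ r + a * ENNReal.ofReal (C - B) ^ r := by
        rw [← mul_add, show C - A = (B - A) + (C - B) by ring,
          ENNReal.ofReal_add (sub_nonneg.2 hAB) (sub_nonneg.2 hBC)]
        exact mul_le_mul_right (ENNReal.rpow_add_le_add_rpow _ _ hr0 hr1) a
    _ ≤ _ := by gcongr

end Concavity

section Costs

variable {Ω : Type*} [MeasurableSpace Ω]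

noncomputable def pieceCost (μ : Measure Ω) (f : Ω → ℝ) (q r : ℝ) (A : Set Ω) : ℝ≥0∞ :=
  (⨆ x ∈ A, ENNReal.ofReal |f x|) ^ q * μ A ^ r

noncomputable def bandCost (μ : Measure Ω) (f : Ω → ℝ) (q r a b : ℝ) : ℝ≥0∞ :=
  decRearr μ f a ^ q * ENNReal.ofReal (b - a) ^ r

def IsMeasurablePartitionOf {n : ℕ} (E : Set Ω) (A : Fin n → Set Ω) : Prop :=
  (∀ i, MeasurableSet (A i)) ∧ Pairwise (Function.onFun Disjoint A) ∧ ⋃ i, A i = E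

variable {μ : Measure Ω} {f : Ω → ℝ} {q r : ℝ}

lemma bandCost_self (hr : 0 < r) (a : ℝ) : bandCost μ f q r a a = 0 := by
  simp [bandCost, ENNReal.zero_rpow_of_pos hr]

lemma pieceCost_eq_zero_of_measure_eq_zero (hr : 0 < r) {A : Set Ω} (hA : μ A = 0) :
    pieceCost μ f q r A = 0 := by
  simp [pieceCost, hA, ENNReal.zero_rpow_of_pos hr]

lemma isMeasurablePartitionOf_single {E : Set Ω} (hE : MeasurableSet E) :
    IsMeasurablePartitionOf E fun _ : Fin 1 => E :=
  ⟨fun _ => hE, Subsingleton.pairwise, iUnion_const E⟩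

lemma IsMeasurablePartitionOf.cons {n : ℕ} {G E : Set Ω} {A : Fin n → Set Ω}
    (hA : IsMeasurablePartitionOf G A) (hGE : G ⊆ E) (hE : MeasurableSet E) :
    IsMeasurablePartitionOf E (Fin.cons (E \ G) A : Fin (n + 1) → Set Ω) := by
  obtain ⟨hmeas, hdisj, hunion⟩ := hA
  refine ⟨Fin.cases (hE.diff (hunion ▸ MeasurableSet.iUnion hmeas)) hmeas, ?_, ?_⟩
  · refine pairwise_fin_succ_iff_of_isSymm.2 ⟨fun j => ?_, fun i j hij => hdisj hij⟩
    exact disjoint_sdiff_left.mono_right (hunion ▸ subset_iUnion A j)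
  · simp [iUnion_fin_add_one_eq_iUnion_succ, hunion, sdiff_union_of_subset hGE]

lemma strictMono_snoc {α : Type*} [Preorder α] {n : ℕ} {τ : Fin (n + 1) → α} (hτ : StrictMono τ)
    {x : α} (hx : τ (Fin.last n) < x) : StrictMono (Fin.snoc τ x : Fin (n + 2) → α) := by
  refine Fin.strictMono_iff_lt_succ.2 fun i => ?_
  cases i using Fin.lastCases with
  | last => rwa [Fin.snoc_castSucc, Fin.succ_last, Fin.snoc_last]
  | cast j =>
    rw [Fin.succ_castSucc, Fin.snoc_castSucc, Fin.snoc_castSucc]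
    exact hτ j.castSucc_lt_succ

lemma sum_bandCost_snoc {n : ℕ} (τ : Fin (n + 1) → ℝ) (x : ℝ) :
    ∑ j : Fin (n + 1), bandCost μ f q r ((Fin.snoc τ x : Fin (n + 2) → ℝ) j.castSucc)
        ((Fin.snoc τ x : Fin (n + 2) → ℝ) j.succ) =
      ∑ j : Fin n, bandCost μ f q r (τ j.castSucc) (τ j.succ) +
        bandCost μ f q r (τ (Fin.last n)) x := by
  simp only [Fin.sum_univ_castSucc, Fin.succ_castSucc, Fin.snoc_castSucc, Fin.succ_last,
    Fin.snoc_last]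

end Costs

section UpperBound

variable {Ω : Type*} [MeasurableSpace Ω] {μ : Measure Ω} [IsFiniteMeasure μ] {f : Ω → ℝ}
  {q r : ℝ}

lemma exists_partition_extend_superlevel (hf : Measurable f) (hq : 0 ≤ q) {w : ℝ≥0∞} {t : ℝ}
    {E : Set Ω} (hE : MeasurableSet E) (hμE : μ E = ENNReal.ofReal t)
    (hGE : {x | w < ENNReal.ofReal |f x|} ⊆ E) {n : ℕ} {A : Fin n → Set Ω}
    (hA : IsMeasurablePartitionOf {x | w < ENNReal.ofReal |f x|} A) :
    ∃ (m : ℕ) (A' : Fin m → Set Ω), IsMeasurablePartitionOf E A' ∧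
      ∑ i, pieceCost μ f q r (A' i) ≤
        w ^ q * ENNReal.ofReal (t - (μ {x | w < ENNReal.ofReal |f x|}).toReal) ^ r +
          ∑ i, pieceCost μ f q r (A i) := by
  set G := {x | w < ENNReal.ofReal |f x|}
  have hG : MeasurableSet G := measurableSet_lt measurable_const hf.abs.ennreal_ofReal
  have hμ : μ (E \ G) = ENNReal.ofReal (t - (μ G).toReal) := by
    rw [measure_sdiff hGE hG.nullMeasurableSet (measure_ne_top μ G), hμE, ENNReal.ofReal_sub _ ENNReal.toReal_nonneg,
      ENNReal.ofReal_toReal (measure_ne_top μ G)]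
  refine ⟨n + 1, Fin.cons (E \ G) A, hA.cons hGE hE, ?_⟩
  rw [Fin.sum_univ_succ, Fin.cons_zero, ← hμ]
  simp only [Fin.cons_succ]
  gcongr
  exact mul_le_mul_left (ENNReal.rpow_le_rpow (iSup₂_le fun x hx => not_lt.1 hx.2) hq) _

theorem exists_partition_sum_pieceCost_le (hf : Measurable f) (hq : 0 ≤ q) (hr0 : 0 < r)
    (hr1 : r ≤ 1) {τ : ℕ → ℝ} (hτ : Monotone τ) (hτ0 : τ 0 = 0) (n : ℕ) {t : ℝ} {E : Set Ω}
    (hE : MeasurableSet E) (hτt : τ n ≤ t) (hμE : μ E = ENNReal.ofReal t)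
    (hlevel : {x | decRearr μ f (τ n) < ENNReal.ofReal |f x|} ⊆ E) :
    ∃ (m : ℕ) (A : Fin m → Set Ω), IsMeasurablePartitionOf E A ∧
      ∑ i, pieceCost μ f q r (A i) ≤
        ∑ j ∈ Finset.range n, bandCost μ f q r (τ j) (τ (j + 1)) + bandCost μ f q r (τ n) t := by
  have hGmeas (w : ℝ≥0∞) : MeasurableSet {x | w < ENNReal.ofReal |f x|} :=
    measurableSet_lt measurable_const hf.abs.ennreal_ofReal
  induction n generalizing t E with
  | zero =>
    set G := {x | decRearr μ f (τ 0) < ENNReal.ofReal |f x|} with hGdef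
    have hG : μ G = 0 := by
      have := measure_decRearr_lt_le μ f (τ 0)
      rwa [← hGdef, hτ0, ENNReal.ofReal_zero, nonpos_iff_eq_zero] at this
    obtain ⟨m, A, hA, hcost⟩ := exists_partition_extend_superlevel (r := r) hf hq hE hμE hlevel
      (isMeasurablePartitionOf_single (hGmeas _))
    refine ⟨m, A, hA, hcost.trans_eq ?_⟩
    rw [Fintype.sum_eq_zero _ fun _ => pieceCost_eq_zero_of_measure_eq_zero hr0 hG, hG,
      Finset.sum_range_zero, bandCost, hτ0]
    simp
  | succ n ih =>
    set a := decRearr μ f (τ n)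
    set b := decRearr μ f (τ (n + 1))
    have hba : b ≤ a := decRearr_antitone μ f (hτ n.le_succ)
    rw [Finset.sum_range_succ, add_assoc]
    by_cases hmerge : bandCost μ f q r (τ n) t ≤
        bandCost μ f q r (τ n) (τ (n + 1)) + bandCost μ f q r (τ (n + 1)) t
    · obtain ⟨m, A, hA, hcost⟩ := ih hE ((hτ n.le_succ).trans hτt) hμE
        fun x hx => hlevel (hba.trans_lt hx)
      exact ⟨m, A, hA, hcost.trans (by gcongr)⟩
    push Not at hmerge
    simp only [bandCost] at hmerge
    have hlt : b < a := lt_of_not_ge fun hab =>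
      (lt_of_split_cost_lt hr0.le hr1 (hτ n.le_succ) hτt hmerge).not_ge
        (ENNReal.rpow_le_rpow hab hq)
    set s := (μ {x | b < ENNReal.ofReal |f x|}).toReal
    have hτs : τ n ≤ s := (ENNReal.ofReal_le_iff_le_toReal (measure_ne_top μ _)).1
      (le_measure_lt_of_lt_decRearr μ hf hlt)
    have hsτ : s ≤ τ (n + 1) := ENNReal.toReal_le_of_le_ofReal
      ((hτ (Nat.zero_le _)).trans' hτ0.ge) (measure_decRearr_lt_le μ f _)
    obtain ⟨m, A, hA, hcost⟩ := ih (hGmeas b) hτs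
      (ENNReal.ofReal_toReal (measure_ne_top μ _)).symm fun x hx => hba.trans_lt hx
    obtain ⟨m', A', hA', hcost'⟩ := exists_partition_extend_superlevel hf hq hE hμE hlevel hA
    refine ⟨m', A', hA', hcost'.trans ?_⟩
    calc _ ≤ b ^ q * ENNReal.ofReal (t - s) ^ r +
            (∑ j ∈ Finset.range n, bandCost μ f q r (τ j) (τ (j + 1)) +
              a ^ q * ENNReal.ofReal (s - τ n) ^ r) := add_le_add le_rfl hcost
      _ ≤ _ := by
          rw [add_comm, add_assoc]
          exact add_le_add le_rfl (split_cost_le_of_lt hr0 hr1 hτs hsτ hτt hmerge)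

theorem exists_isBorelPartition_sum_pieceCost_le (hf : Measurable f) (hq : 0 ≤ q) (hr0 : 0 < r)
    (hr1 : r ≤ 1) {n : ℕ} {τ : Fin (n + 1) → ℝ} (hτ : Monotone τ) (hτ0 : τ 0 = 0)
    (hlast : τ (Fin.last n) = (μ univ).toReal) :
    ∃ (m : ℕ) (A : Fin m → Set Ω), IsBorelPartition A ∧
      ∑ i, pieceCost μ f q r (A i) ≤ ∑ j : Fin n, bandCost μ f q r (τ j.castSucc) (τ j.succ) := by
  set τN : ℕ → ℝ := fun j => τ (Fin.clamp j n)
  have hτN (j : Fin (n + 1)) : τN j = τ j := congrArg τ (Fin.ext (min_eq_left j.is_le))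
  have hτNn : μ univ = ENNReal.ofReal (τN n) := by
    rw [← Fin.val_last n, hτN, hlast, ENNReal.ofReal_toReal (measure_ne_top μ univ)]
  obtain ⟨m, A, hA, hcost⟩ := exists_partition_sum_pieceCost_le (τ := τN) hf hq hr0 hr1
    (hτ.comp Fin.clamp_monotone) ((hτN 0).trans hτ0) n MeasurableSet.univ le_rfl hτNn
    (subset_univ _)
  refine ⟨m, A, hA, hcost.trans_eq ?_⟩
  rw [bandCost_self hr0, add_zero, ← Fin.sum_univ_eq_sum_range
    (fun j => bandCost μ f q r (τN j) (τN (j + 1)))]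
  exact Finset.sum_congr rfl fun j _ => by rw [← hτN j.castSucc, ← hτN j.succ]; rfl

end UpperBound

section LowerBound

variable {Ω : Type*} [MeasurableSpace Ω] {μ : Measure Ω} [IsFiniteMeasure μ] {f : Ω → ℝ}
  {q r : ℝ}

lemma exists_chain_snoc_le (hq : 0 ≤ q) {U B : Set Ω} (hU : MeasurableSet U)
    (hB : ∀ x ∉ U, ENNReal.ofReal |f x| ≤ ⨆ y ∈ B, ENNReal.ofReal |f y|) {n : ℕ}
    {τ : Fin (n + 1) → ℝ} (hτ0 : τ 0 = 0) (hτ : StrictMono τ)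
    (hlast : τ (Fin.last n) = (μ U).toReal) :
    ∃ (m : ℕ) (τ' : Fin (m + 1) → ℝ), τ' 0 = 0 ∧ StrictMono τ' ∧
      τ' (Fin.last m) = (μ U + μ B).toReal ∧
      ∑ j : Fin m, bandCost μ f q r (τ' j.castSucc) (τ' j.succ) ≤
        ∑ j : Fin n, bandCost μ f q r (τ j.castSucc) (τ j.succ) + pieceCost μ f q r B := by
  obtain hB0 | hBpos := eq_zero_or_pos (μ B)
  · exact ⟨n, τ, hτ0, hτ, by rw [hB0, add_zero, hlast], le_self_add⟩
  have hnext : τ (Fin.last n) < (μ U + μ B).toReal := by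
    rw [hlast]
    exact ENNReal.toReal_strict_mono (ENNReal.add_ne_top.2 ⟨measure_ne_top μ U, measure_ne_top μ B⟩)
      (ENNReal.lt_add_right (measure_ne_top μ U) hBpos.ne')
  refine ⟨n + 1, Fin.snoc τ (μ U + μ B).toReal, by simpa using hτ0, strictMono_snoc hτ hnext,
    by simp, ?_⟩
  rw [sum_bandCost_snoc]
  refine add_le_add le_rfl ?_
  have hweight : decRearr μ f (τ (Fin.last n)) ≤ ⨆ y ∈ B, ENNReal.ofReal |f y| := by
    rw [hlast]
    exact (decRearr_le_iSup_compl μ f hU (ENNReal.ofReal_toReal (measure_ne_top μ U)).ge).trans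
      (iSup₂_le hB)
  have hlength : ENNReal.ofReal ((μ U + μ B).toReal - τ (Fin.last n)) = μ B := by
    rw [hlast, ENNReal.toReal_add (measure_ne_top μ U) (measure_ne_top μ B), add_sub_cancel_left,
      ENNReal.ofReal_toReal (measure_ne_top μ B)]
  rw [bandCost, hlength, pieceCost]
  gcongr

theorem exists_chain_sum_bandCost_le {ι : Type*} [DecidableEq ι] (hq : 0 ≤ q)
    {A : ι → Set Ω} (hA : ∀ i, MeasurableSet (A i)) (hAd : Pairwise (Function.onFun Disjoint A))
    (s : Finset ι)
    (hs : ∀ x ∉ ⋃ i ∈ s, A i, ∀ i ∈ s, ENNReal.ofReal |f x| ≤ ⨆ y ∈ A i, ENNReal.ofReal |f y|) :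
    ∃ (m : ℕ) (τ : Fin (m + 1) → ℝ), τ 0 = 0 ∧ StrictMono τ ∧
      τ (Fin.last m) = (μ (⋃ i ∈ s, A i)).toReal ∧
      ∑ j : Fin m, bandCost μ f q r (τ j.castSucc) (τ j.succ) ≤
        ∑ i ∈ s, pieceCost μ f q r (A i) := by
  induction s using Finset.induction_on_min_value (fun i => ⨆ y ∈ A i, ENNReal.ofReal |f y|) with
  | empty => exact ⟨0, fun _ => 0, rfl, Fin.strictMono_iff_lt_succ.2 finZeroElim, by simp, by simp⟩
  | insert a s ha hmin ih =>
    set U := ⋃ i ∈ s, A i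
    have hinsert : ⋃ i ∈ insert a s, A i = A a ∪ U := Finset.set_biUnion_insert a s A
    have hbound (x : Ω) (hx : x ∉ U) :
        ENNReal.ofReal |f x| ≤ ⨆ y ∈ A a, ENNReal.ofReal |f y| := by
      by_cases hxa : x ∈ A a
      · exact le_biSup (fun y => ENNReal.ofReal |f y|) hxa
      · exact hs x (by rw [hinsert]; exact fun h => h.elim hxa hx) a (Finset.mem_insert_self a s)
    have hU : MeasurableSet U := Finset.measurableSet_biUnion s fun i _ => hA i
    obtain ⟨m, τ, hτ0, hτ, hlast, hcost⟩ := ih fun x hx i hi => (hbound x hx).trans (hmin i hi)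
    obtain ⟨m', τ', hτ0', hτ', hlast', hcost'⟩ := exists_chain_snoc_le hq hU hbound hτ0 hτ hlast
    have hμ : μ (A a ∪ U) = μ U + μ (A a) := by
      rw [measure_union (disjoint_iUnion₂_right.2 fun i hi => hAd (ne_of_mem_of_not_mem hi ha).symm)
        hU, add_comm]
    refine ⟨m', τ', hτ0', hτ', by rw [hinsert, hμ, hlast'], hcost'.trans ?_⟩
    rw [Finset.sum_insert ha, add_comm]
    gcongr

theorem exists_chain_sum_bandCost_le_of_isBorelPartition (hq : 0 ≤ q) {n : ℕ}
    {A : Fin n → Set Ω} (hA : IsBorelPartition A) :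
    ∃ (m : ℕ) (τ : Fin (m + 1) → ℝ), τ 0 = 0 ∧ StrictMono τ ∧ τ (Fin.last m) = (μ univ).toReal ∧
      ∑ j : Fin m, bandCost μ f q r (τ j.castSucc) (τ j.succ) ≤ ∑ i, pieceCost μ f q r (A i) := by
  have hunion : ⋃ i ∈ Finset.univ, A i = univ := by simpa using hA.2.2
  simpa [hA.2.2] using exists_chain_sum_bandCost_le (μ := μ) (f := f) hq hA.1 hA.2.1
    Finset.univ fun x hx => absurd (hunion ▸ mem_univ x) hx

end LowerBound

theorem lambdaInf_eq_inf_rearrangement_general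
    {Ω : Type*} [MeasurableSpace Ω]
    (p q : ℝ) (hq : 0 < q) (hqp : q < p)
    (μ : Measure Ω) [IsFiniteMeasure μ]
    (f : Ω → ℝ) (hf : Measurable f) :
    LambdaInf μ p q f =
      ⨅ (n : ℕ) (τ : Fin (n + 1) → ℝ) (_ : τ 0 = 0) (_ : StrictMono τ)
        (_ : τ (Fin.last n) = (μ univ).toReal),
        (∑ j : Fin n, decRearr μ f (τ j.castSucc) ^ q *
          ENNReal.ofReal (τ j.succ - τ j.castSucc) ^ (q / p)) ^ (1 / q) := by
  have hr0 : 0 < q / p := div_pos hq (hq.trans hqp)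
  have hr1 : q / p ≤ 1 := (div_le_one (hq.trans hqp)).2 hqp.le
  have hroot : Monotone fun x : ℝ≥0∞ => x ^ (1 / q) :=
    fun _ _ h => ENNReal.rpow_le_rpow h (by positivity)
  apply le_antisymm
  · refine le_iInf₂ fun n τ => le_iInf fun hτ0 => le_iInf fun hτ => le_iInf fun hlast => ?_
    obtain ⟨m, A, hA, hcost⟩ :=
      exists_isBorelPartition_sum_pieceCost_le hf hq.le hr0 hr1 hτ.monotone hτ0 hlast
    exact iInf₂_le_of_le m A (iInf_le_of_le hA (hroot hcost))
  · refine le_iInf₂ fun n A => le_iInf fun hA => ?_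
    obtain ⟨m, τ, hτ0, hτ, hlast, hcost⟩ :=
      exists_chain_sum_bandCost_le_of_isBorelPartition (μ := μ) (f := f) hq.le hA
    exact iInf₂_le_of_le m τ (iInf_le_of_le hτ0 (iInf_le_of_le hτ (iInf_le_of_le hlast
      (hroot hcost))))

/-- For `0 < q < p < ∞` and a finite Borel measure `μ`, the
`Λ_{p,q}(μ)` functional (infimum version) of a Borel function `f` equals
`inf_𝒯 (Σⱼ f*(τⱼ₋₁)^q (τⱼ - τⱼ₋₁)^{q/p})^{1/q}` over finite sets
`𝒯 = {τ₀ = 0 < τ₁ < ⋯ < τₙ = μ(Ω)}`. -/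
theorem lambdaInf_eq_inf_rearrangement
    {Ω : Type*} [TopologicalSpace Ω] [CompactSpace Ω] [T2Space Ω]
    [MeasurableSpace Ω] [BorelSpace Ω]
    (p q : ℝ) (hq : 0 < q) (hqp : q < p)
    (μ : Measure Ω) [IsFiniteMeasure μ]
    (f : Ω → ℝ) (hf : Measurable f) :
    LambdaInf μ p q f =
      ⨅ (n : ℕ) (τ : Fin (n + 1) → ℝ) (_ : τ 0 = 0) (_ : StrictMono τ)
        (_ : τ (Fin.last n) = (μ univ).toReal),
        (∑ j : Fin n, decRearr μ f (τ j.castSucc) ^ q *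
          ENNReal.ofReal (τ j.succ - τ j.castSucc) ^ (q / p)) ^ (1 / q) :=
  lambdaInf_eq_inf_rearrangement_general p q hq hqp μ f hf
end

section
/- Let μ be a Borel probability measure on a compact Hausdorff space Ω and let 0 < r < p < q < ∞. Then for every Borel function w ≥ 0, ∫ w^r dμ ≤ (p/q) ((q − r)/(p − r))^{1 − r/q} ‖w‖_{L_{p,q}(μ)}^r. -/
open Set Filter Topology MeasureTheory ENNReal

/-! If `μ {w > s}` exceeds `t`, no set of measure `≤ t` contains `{w > s}`, so `s ≤ w*(t)`; hence
`μ {w > s} ≤ |{t > 0 : s ≤ w*(t)}|` and the layer cake formula gives `∫ w^r dμ ≤ ∫₀^∞ w*(t)^r dt`.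
For a probability measure `w*` vanishes on `[1, ∞)`. On `(0, 1)` write
`w*^r = (t^(q/p-1) w*^q)^(r/q) · (t^(-(q/p-1) r/(q-r)))^(1-r/q)` and apply Hölder with exponents
`q/r` and `q/(q-r)`: the first factor integrates to at most `(p/q) ‖w‖_{L_{p,q}}^q`, the second
to `p(q-r) / (q(p-r))`. -/

lemma lintegral_rpow_le_weighted_holder {α : Type*} [MeasurableSpace α] (ν : Measure α) {r q : ℝ}
    (hr : 0 < r) (hrq : r < q) {f ψ : α → ℝ≥0∞} (hf : AEMeasurable f ν)
    (hψ : AEMeasurable ψ ν) (hweight_ne_zero : ∀ᵐ x ∂ν, ψ x ≠ 0) (hψtop : ∀ᵐ x ∂ν, ψ x ≠ ∞) :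
    ∫⁻ x, f x ^ r ∂ν ≤
      (∫⁻ x, ψ x * f x ^ q ∂ν) ^ (r / q) * (∫⁻ x, ψ x ^ (-(r / (q - r))) ∂ν) ^ (1 - r / q) := by
  have hq : 0 < q := hr.trans hrq
  have hsplit : ∀ᵐ x ∂ν, f x ^ r =
      (ψ x * f x ^ q) ^ (r / q) * (ψ x ^ (-(r / (q - r)))) ^ (1 - r / q) := by
    filter_upwards [hweight_ne_zero, hψtop] with x h0 htop
    have hexp : -(r / (q - r)) * (1 - r / q) = -(r / q) := by
      field_simp [(sub_pos.mpr hrq).ne']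
    rw [ENNReal.mul_rpow_of_nonneg _ _ (by positivity), ← ENNReal.rpow_mul, ← ENNReal.rpow_mul,
      hexp, mul_div_cancel₀ _ hq.ne', mul_right_comm, ← ENNReal.rpow_add _ _ h0 htop,
      add_neg_cancel, ENNReal.rpow_zero, one_mul]
  rw [lintegral_congr_ae hsplit]
  exact ENNReal.lintegral_mul_norm_pow_le (hψ.mul (hf.pow_const q)) (hψ.pow_const _)
    (by positivity) (by rw [sub_nonneg, div_le_one hq]; exact hrq.le) (add_sub_cancel _ _)

lemma lintegral_Ioo_zero_one_rpow {β : ℝ} (hβ : -1 < β) :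
    ∫⁻ t in Ioo 0 1, ENNReal.ofReal (t ^ β) = ENNReal.ofReal (1 / (β + 1)) := by
  have hint : IntegrableOn (fun t : ℝ => t ^ β) (Ioc 0 1) :=
    (intervalIntegrable_iff_integrableOn_Ioc_of_le zero_le_one).mp
      (intervalIntegral.intervalIntegrable_rpow' hβ)
  rw [setLIntegral_congr Ioo_ae_eq_Ioc, ← ofReal_integral_eq_lintegral_ofReal hint
    ((ae_restrict_iff' measurableSet_Ioc).mpr
      (ae_of_all _ fun t ht => Real.rpow_nonneg ht.1.le β)),
    ← intervalIntegral.integral_of_le zero_le_one, integral_rpow (Or.inl hβ)]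
  simp [Real.zero_rpow (by linarith : β + 1 ≠ 0)]

lemma lintegral_Ioo_zero_one_dual_weight {p q r : ℝ} (hr : 0 < r) (hrp : r < p) (hpq : p < q) :
    ∫⁻ t in Ioo 0 1, ENNReal.ofReal (t ^ (q / p - 1)) ^ (-(r / (q - r))) =
      ENNReal.ofReal (p / q * ((q - r) / (p - r))) := by
  have hp : 0 < p := hr.trans hrp
  have hq : 0 < q := hp.trans hpq
  have hqr : 0 < q - r := sub_pos.mpr (hrp.trans hpq)
  have hpr : 0 < p - r := sub_pos.mpr hrp
  have hβ : (q / p - 1) * -(r / (q - r)) + 1 = q * (p - r) / (p * (q - r)) := by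
    field_simp
    ring
  have hβ_pos : 0 < q * (p - r) / (p * (q - r)) := by positivity
  rw [setLIntegral_congr_fun measurableSet_Ioo fun t (ht : t ∈ Ioo 0 1) => by
      rw [ENNReal.ofReal_rpow_of_pos (Real.rpow_pos_of_pos ht.1 _), ← Real.rpow_mul ht.1.le],
    lintegral_Ioo_zero_one_rpow (by linarith), hβ]
  congr 1
  field_simp

section DecreasingRearrangement

variable {Ω : Type*} [MeasurableSpace Ω] {μ : Measure Ω} {w : Ω → ℝ}

lemma antitone_decRearr : Antitone (decRearr μ w) := fun _ _ hst =>
  le_iInf₂ fun E hE => le_iInf fun hμE =>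
    iInf₂_le_of_le E hE (iInf_le_of_le (hμE.trans (ENNReal.ofReal_le_ofReal hst)) le_rfl)

lemma decRearr_eq_zero_of_one_le [IsProbabilityMeasure μ] {t : ℝ} (ht : 1 ≤ t) :
    decRearr μ w t = 0 :=
  nonpos_iff_eq_zero.mp <| iInf₂_le_of_le univ MeasurableSet.univ <|
    iInf_le_of_le (by simpa using ht) (by simp)

lemma ofReal_le_decRearr {s t : ℝ} (hst : ENNReal.ofReal t < μ {x | s < w x}) :
    ENNReal.ofReal s ≤ decRearr μ w t := by
  refine le_iInf₂ fun E _ => le_iInf fun hμE => ?_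
  obtain ⟨x, hxs, hxE⟩ : ∃ x, s < w x ∧ x ∉ E := by
    by_contra! h
    exact (hμE.trans_lt hst).not_ge (measure_mono h)
  exact (ENNReal.ofReal_le_ofReal (hxs.le.trans (le_abs_self _))).trans
    (le_biSup (fun x => ENNReal.ofReal |w x|) (show x ∈ Eᶜ from hxE))

lemma decRearr_ne_top [IsFiniteMeasure μ] (hw : Measurable w) {t : ℝ} (ht : 0 < t) :
    decRearr μ w t ≠ ∞ := by
  have hlim : Tendsto (fun n : ℕ => μ {x | (n : ℝ) < |w x|}) atTop (𝓝 0) := by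
    have hempty : (⋂ n : ℕ, {x | (n : ℝ) < |w x|}) = ∅ :=
      eq_empty_of_forall_notMem fun x hx => (exists_nat_ge |w x|).elim fun n hn =>
        (mem_iInter.mp hx n).not_ge hn
    have hanti : Antitone fun n : ℕ => {x | (n : ℝ) < |w x|} :=
      fun m n hmn x (hx : (n : ℝ) < _) =>
        show (m : ℝ) < |w x| from (Nat.cast_le.mpr hmn).trans_lt hx
    have := tendsto_measure_iInter_atTop
      (fun n => (measurableSet_lt measurable_const hw.abs).nullMeasurableSet) hanti
      ⟨0, measure_ne_top μ _⟩
    rwa [hempty, measure_empty] at this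
  obtain ⟨n, hn⟩ := (hlim.eventually (gt_mem_nhds (ENNReal.ofReal_pos.mpr ht))).exists
  refine ne_top_of_le_ne_top ENNReal.ofReal_ne_top (b := ENNReal.ofReal n) ?_
  refine iInf₂_le_of_le _ (measurableSet_lt measurable_const hw.abs) (iInf_le_of_le hn.le ?_)
  exact iSup₂_le fun x hx => ENNReal.ofReal_le_ofReal (not_lt.mp hx)

lemma measure_lt_le_volume_le_decRearr [IsFiniteMeasure μ] (hw : Measurable w) (s : ℝ) :
    μ {x | s < w x} ≤ volume.restrict (Ioi 0) {t | s ≤ (decRearr μ w t).toReal} := by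
  set d := μ {x | s < w x}
  have hd : d ≠ ∞ := measure_ne_top μ _
  have hsub : Ioo 0 d.toReal ⊆ Ioi 0 ∩ {t | s ≤ (decRearr μ w t).toReal} := by
    rintro t ⟨ht0, htd⟩
    refine ⟨ht0, (ENNReal.ofReal_le_iff_le_toReal (decRearr_ne_top hw ht0)).mp ?_⟩
    exact ofReal_le_decRearr ((ENNReal.ofReal_lt_iff_lt_toReal ht0.le hd).mpr htd)
  calc d = volume (Ioo 0 d.toReal) := by rw [Real.volume_Ioo, sub_zero, ENNReal.ofReal_toReal hd]
    _ ≤ _ := by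
      rw [Measure.restrict_apply' measurableSet_Ioi, inter_comm]
      exact measure_mono hsub

theorem lintegral_rpow_le_setLIntegral_decRearr_rpow [IsFiniteMeasure μ] {r : ℝ} (hr : 0 < r)
    (hw : Measurable w) (hw0 : ∀ x, 0 ≤ w x) :
    ∫⁻ x, ENNReal.ofReal (w x ^ r) ∂μ ≤ ∫⁻ t in Ioi 0, decRearr μ w t ^ r := by
  have hd : Measurable fun t => (decRearr μ w t).toReal :=
    antitone_decRearr.measurable.ennreal_toReal
  calc ∫⁻ x, ENNReal.ofReal (w x ^ r) ∂μ
      = ENNReal.ofReal r * ∫⁻ s in Ioi 0, μ {x | s < w x} * ENNReal.ofReal (s ^ (r - 1)) :=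
        lintegral_rpow_eq_lintegral_meas_lt_mul μ (ae_of_all _ hw0) hw.aemeasurable hr
    _ ≤ ENNReal.ofReal r * ∫⁻ s in Ioi 0, volume.restrict (Ioi 0)
          {t | s ≤ (decRearr μ w t).toReal} * ENNReal.ofReal (s ^ (r - 1)) := by
        gcongr with s
        exact measure_lt_le_volume_le_decRearr hw s
    _ = ∫⁻ t in Ioi 0, ENNReal.ofReal ((decRearr μ w t).toReal ^ r) :=
        (lintegral_rpow_eq_lintegral_meas_le_mul _ (ae_of_all _ fun _ => ENNReal.toReal_nonneg)
          hd.aemeasurable hr).symm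
    _ ≤ ∫⁻ t in Ioi 0, decRearr μ w t ^ r := by
        gcongr with t
        rw [← ENNReal.ofReal_rpow_of_nonneg ENNReal.toReal_nonneg hr.le]
        gcongr
        exact ENNReal.ofReal_toReal_le

lemma lorentzNorm_rpow {p q : ℝ} (hq : q ≠ 0) :
    LorentzNorm μ p q w ^ q =
      ∫⁻ t in Ioi 0, ENNReal.ofReal (q / p * t ^ (q / p - 1)) * decRearr μ w t ^ q := by
  rw [LorentzNorm, ← ENNReal.rpow_mul, one_div_mul_cancel hq, ENNReal.rpow_one]

lemma setLIntegral_Ioi_decRearr_rpow_eq_Ioo [IsProbabilityMeasure μ] {r : ℝ} (hr : 0 < r) :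
    ∫⁻ t in Ioi 0, decRearr μ w t ^ r = ∫⁻ t in Ioo 0 1, decRearr μ w t ^ r := by
  have hzero : ∫⁻ t in Ici 1, decRearr μ w t ^ r = 0 := by
    rw [setLIntegral_congr_fun measurableSet_Ici fun t (ht : 1 ≤ t) => by
      rw [decRearr_eq_zero_of_one_le ht, ENNReal.zero_rpow_of_pos hr], lintegral_zero]
  rw [← Ioo_union_Ici_eq_Ioi zero_lt_one,
    lintegral_union measurableSet_Ici ((Iio_disjoint_Ici le_rfl).mono_left Ioo_subset_Iio_self),
    hzero, add_zero]

lemma setLIntegral_Ioo_weight_mul_decRearr_rpow_le {p q : ℝ} (hp : 0 < p) (hq : 0 < q) :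
    ∫⁻ t in Ioo 0 1, ENNReal.ofReal (t ^ (q / p - 1)) * decRearr μ w t ^ q ≤
      ENNReal.ofReal (p / q) * LorentzNorm μ p q w ^ q := by
  set X := ∫⁻ t in Ioo 0 1, ENNReal.ofReal (t ^ (q / p - 1)) * decRearr μ w t ^ q
  have hX : ENNReal.ofReal (q / p) * X ≤ LorentzNorm μ p q w ^ q := by
    rw [lorentzNorm_rpow hq.ne', ← lintegral_const_mul' _ _ ENNReal.ofReal_ne_top]
    refine (lintegral_mono fun t => ?_).trans (lintegral_mono_set Ioo_subset_Ioi_self)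
    rw [← mul_assoc, ← ENNReal.ofReal_mul (by positivity)]
  calc X = ENNReal.ofReal (p / q) * (ENNReal.ofReal (q / p) * X) := by
        rw [← mul_assoc, ← ENNReal.ofReal_mul (by positivity),
          show p / q * (q / p) = 1 by field_simp, ENNReal.ofReal_one, one_mul]
    _ ≤ _ := by gcongr

theorem setLIntegral_decRearr_rpow_le_lorentzNorm [IsProbabilityMeasure μ] {r p q : ℝ}
    (hr : 0 < r) (hrp : r < p) (hpq : p < q) :
    ∫⁻ t in Ioi 0, decRearr μ w t ^ r ≤
      ENNReal.ofReal (p / q * ((q - r) / (p - r)) ^ (1 - r / q)) * LorentzNorm μ p q w ^ r := by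
  have hp : 0 < p := hr.trans hrp
  have hq : 0 < q := hp.trans hpq
  have hweight_ne_zero :
      ∀ᵐ t ∂volume.restrict (Ioo (0 : ℝ) 1), ENNReal.ofReal (t ^ (q / p - 1)) ≠ 0 :=
    (ae_restrict_iff' measurableSet_Ioo).mpr <| ae_of_all _ fun t ht =>
      (ENNReal.ofReal_pos.mpr (Real.rpow_pos_of_pos ht.1 _)).ne'
  calc ∫⁻ t in Ioi 0, decRearr μ w t ^ r
      = ∫⁻ t in Ioo 0 1, decRearr μ w t ^ r := setLIntegral_Ioi_decRearr_rpow_eq_Ioo hr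
    _ ≤ (∫⁻ t in Ioo 0 1, ENNReal.ofReal (t ^ (q / p - 1)) * decRearr μ w t ^ q) ^ (r / q) *
        (∫⁻ t in Ioo 0 1, ENNReal.ofReal (t ^ (q / p - 1)) ^ (-(r / (q - r)))) ^ (1 - r / q) :=
        lintegral_rpow_le_weighted_holder _ hr (hrp.trans hpq)
          antitone_decRearr.measurable.aemeasurable (by fun_prop) hweight_ne_zero
          (ae_of_all _ fun _ => ENNReal.ofReal_ne_top)
    _ ≤ (ENNReal.ofReal (p / q) * LorentzNorm μ p q w ^ q) ^ (r / q) *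
        ENNReal.ofReal (p / q * ((q - r) / (p - r))) ^ (1 - r / q) := by
        rw [lintegral_Ioo_zero_one_dual_weight hr hrp hpq]
        gcongr
        exact setLIntegral_Ioo_weight_mul_decRearr_rpow_le hp hq
    _ = _ := by
        have hrq : 0 ≤ r / q := by positivity
        have hrq' : 0 ≤ 1 - r / q := by rw [sub_nonneg, div_le_one hq]; exact (hrp.trans hpq).le
        have hpq' : 0 < p / q := by positivity
        have hqrpr : 0 < (q - r) / (p - r) := div_pos (by linarith) (by linarith)
        have hconst : (p / q) ^ (r / q) * (p / q * ((q - r) / (p - r))) ^ (1 - r / q) =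
            p / q * ((q - r) / (p - r)) ^ (1 - r / q) := by
          rw [Real.mul_rpow hpq'.le hqrpr.le, ← mul_assoc, ← Real.rpow_add hpq', add_sub_cancel,
            Real.rpow_one]
        rw [ENNReal.mul_rpow_of_nonneg _ _ hrq, ← ENNReal.rpow_mul, mul_div_cancel₀ _ hq.ne',
          ENNReal.ofReal_rpow_of_nonneg hpq'.le hrq,
          ENNReal.ofReal_rpow_of_nonneg (by positivity) hrq', mul_right_comm,
          ← ENNReal.ofReal_mul (by positivity), hconst]

end DecreasingRearrangement

theorem lintegral_rpow_le_lorentz_general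
    {Ω : Type*}
    [MeasurableSpace Ω]
    (μ : Measure Ω) [IsProbabilityMeasure μ]
    (r p q : ℝ) (hr : 0 < r) (hrp : r < p) (hpq : p < q)
    (w : Ω → ℝ) (hw : Measurable w) (hw0 : ∀ x, 0 ≤ w x) :
    ∫⁻ x, ENNReal.ofReal (w x ^ r) ∂μ ≤
      ENNReal.ofReal (p / q * ((q - r) / (p - r)) ^ (1 - r / q)) *
        LorentzNorm μ p q w ^ r :=
  (lintegral_rpow_le_setLIntegral_decRearr_rpow hr hw hw0).trans
    (setLIntegral_decRearr_rpow_le_lorentzNorm hr hrp hpq)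

/-- For a Borel probability measure `μ` on a compact Hausdorff space and
`0 < r < p < q < ∞`, every Borel `w ≥ 0` satisfies
`∫ w^r dμ ≤ (p/q) ((q-r)/(p-r))^{1-r/q} ‖w‖_{L_{p,q}(μ)}^r`. -/
theorem lintegral_rpow_le_lorentz
    {Ω : Type*} [TopologicalSpace Ω] [CompactSpace Ω] [T2Space Ω]
    [MeasurableSpace Ω] [BorelSpace Ω]
    (μ : Measure Ω) [IsProbabilityMeasure μ]
    (r p q : ℝ) (hr : 0 < r) (hrp : r < p) (hpq : p < q)
    (w : Ω → ℝ) (hw : Measurable w) (hw0 : ∀ x, 0 ≤ w x) :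
    ∫⁻ x, ENNReal.ofReal (w x ^ r) ∂μ ≤
      ENNReal.ofReal (p / q * ((q - r) / (p - r)) ^ (1 - r / q)) *
        LorentzNorm μ p q w ^ r :=
  lintegral_rpow_le_lorentz_general μ r p q hr hrp hpq w hw hw0
end
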